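/- arXiv:math-ph/0607023 — 5 statements merged into one kernel-verified Lean document; each statement's English description precedes it below -/
import Mathlib

section
/- If ω is a Borel probability measure on X satisfying the superstability estimate, then for every sufficiently small λ > 0 one has lim_{N→+∞} e^{λN} ω({x : Q(x) > N}) = 0. -/
open MeasureTheory Real Filter
open scoped ENNReal

noncomputable section

/-- A site of the `d`-dimensional integer lattice. -/
abbrev Site (d : ℕ) := Fin d → ℤ

/-- A configuration: at each site, a position `q` and a momentum `p`. -/
abbrev Conf (d : ℕ) := Site d → ℝ × ℝ

/-- ℓ¹ norm on the lattice. -/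
def lnorm {d : ℕ} (ν : Site d) : ℤ := ∑ ℓ, |ν ℓ|

/-- ℓ¹ distance on the lattice. -/
def ldist {d : ℕ} (i j : Site d) : ℤ := ∑ ℓ, |i ℓ - j ℓ|

/-- The cube `Λ_{ν,k}` of center `ν` and side `2k+1`. -/
def cube {d : ℕ} (ν : Site d) (k : ℕ) : Finset (Site d) :=
  Fintype.piFinset fun ℓ => Finset.Icc (ν ℓ - (k : ℤ)) (ν ℓ + (k : ℤ))

/-- The local energy `W_{ν,k}(x)`. -/
noncomputable def Wen {d : ℕ} (U : Polynomial ℝ) (K : ℝ) (ν : Site d) (k : ℕ)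
    (x : Conf d) : ℝ :=
  (∑ i ∈ cube ν k, ((x i).2 ^ 2 / 2 + U.eval (x i).1 + 1)) +
    K / 4 * ∑ i ∈ cube ν k, ∑ j ∈ cube ν k,
      (if ldist i j = 1 then ((x i).1 - (x j).1) ^ 2 else 0)

/-- The functional `Q(x) = sup_ν sup_{k > log^{1/d}(e+|ν|)} W_{ν,k}(x)/(2k+1)^d`,
with values in `[0,∞]`. -/
noncomputable def Qen {d : ℕ} (U : Polynomial ℝ) (K : ℝ) (x : Conf d) : ℝ≥0∞ :=
  ⨆ ν : Site d, ⨆ k : ℕ,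
    ⨆ _ : Real.log (Real.exp 1 + (lnorm ν : ℝ)) ^ ((1 : ℝ) / (d : ℝ)) < (k : ℝ),
      ENNReal.ofReal (Wen U K ν k x / (2 * (k : ℝ) + 1) ^ d)

/-- The good set of configurations `X₀ = {x : Q(x) < ∞}`. -/
def X0 (d : ℕ) (U : Polynomial ℝ) (K : ℝ) : Set (Conf d) := {x | Qen U K x < ⊤}

/-- Superstability estimate for a measure `ω` with constants `Cw`, `lam0`:
`∫ e^{λ W_{ν,k}} dω ≤ e^{Cw (2k+1)^d}` for all `ν`, `k` and `0 < λ ≤ lam0`. -/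
def Superstable {d : ℕ} (U : Polynomial ℝ) (K : ℝ) (ω : Measure (Conf d))
    (Cw lam0 : ℝ) : Prop :=
  ∀ (ν : Site d) (k : ℕ) (lam : ℝ), 0 < lam → lam ≤ lam0 →
    ∫⁻ x, ENNReal.ofReal (Real.exp (lam * Wen U K ν k x)) ∂ω
      ≤ ENNReal.ofReal (Real.exp (Cw * (2 * (k : ℝ) + 1) ^ d))

/-! Markov's inequality for `exp (λ W_{ν,k})` bounds the probability that a single cube is
overcharged, `ω(W_{ν,k} > N (2k+1)^d) ≤ exp ((C_ω - λ₀ N) (2k+1)^d)`. The constraint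
`k > log^{1/d}(e + |ν|)` in `Q` confines the centres to a cube of side `2⌈e^{k^d}⌉ + 1`, whose
`e^{O(k^d)}` sites are beaten by the factor `e^{-t (2k+1)^d}` once `t = λ₀ N - C_ω` is large;
summing over `k` gives `ω(Q > N) ≤ exp (C_ω - λ₀ N)`, so any `λ < λ₀` works. -/

lemma measure_lt_le_exp_of_lintegral_exp_le {α : Type*} [MeasurableSpace α] {μ : Measure α}
    {f : α → ℝ} (hf : Measurable f) {lam a C : ℝ} (hlam : 0 ≤ lam)
    (h : ∫⁻ x, ENNReal.ofReal (exp (lam * f x)) ∂μ ≤ ENNReal.ofReal (exp C)) :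
    μ {x | a < f x} ≤ ENNReal.ofReal (exp (C - lam * a)) := by
  have hpos : ENNReal.ofReal (exp (lam * a)) ≠ 0 := by simp [exp_pos]
  calc μ {x | a < f x}
      ≤ μ {x | ENNReal.ofReal (exp (lam * a)) ≤ ENNReal.ofReal (exp (lam * f x))} :=
        measure_mono fun x hx => ENNReal.ofReal_le_ofReal <|
          exp_le_exp.2 <| mul_le_mul_of_nonneg_left (le_of_lt hx) hlam
    _ ≤ (∫⁻ x, ENNReal.ofReal (exp (lam * f x)) ∂μ) / ENNReal.ofReal (exp (lam * a)) :=
        meas_ge_le_lintegral_div (by fun_prop) hpos ENNReal.ofReal_ne_top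
    _ ≤ ENNReal.ofReal (exp C) / ENNReal.ofReal (exp (lam * a)) := by gcongr
    _ = ENNReal.ofReal (exp (C - lam * a)) := by
        rw [← ENNReal.ofReal_div_of_pos (exp_pos _), ← exp_sub]

lemma continuous_Wen {d : ℕ} (U : Polynomial ℝ) (K : ℝ) (ν : Site d) (k : ℕ) :
    Continuous (Wen U K ν k) := by
  refine .add (by fun_prop) (continuous_const.mul <| continuous_finsetSum _ fun i _ =>
    continuous_finsetSum _ fun j _ => ?_)
  split_ifs <;> fun_prop

lemma Superstable.measure_lt_Wen_le {d : ℕ} {U : Polynomial ℝ} {K : ℝ} {ω : Measure (Conf d)}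
    {Cw lam0 : ℝ} (hss : Superstable U K ω Cw lam0) (hlam0 : 0 < lam0) (ν : Site d) (k : ℕ)
    (N : ℝ) :
    ω {x | N * (2 * (k : ℝ) + 1) ^ d < Wen U K ν k x}
      ≤ ENNReal.ofReal (exp ((Cw - lam0 * N) * (2 * (k : ℝ) + 1) ^ d)) := by
  convert measure_lt_le_exp_of_lintegral_exp_le (continuous_Wen U K ν k).measurable hlam0.le
    (hss ν k lam0 hlam0 le_rfl) using 4
  ring

lemma card_cube {d : ℕ} (ν : Site d) (k : ℕ) : (cube ν k).card = (2 * k + 1) ^ d := by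
  have (ℓ : Fin d) : (ν ℓ + k + 1 - (ν ℓ - k)).toNat = 2 * k + 1 := by omega
  simp only [cube, Fintype.card_piFinset, Int.card_Icc, this, Finset.prod_const, Finset.card_univ,
    Fintype.card_fin]

lemma mem_cube_zero_of_lnorm_le {d : ℕ} {ν : Site d} {M : ℕ} (h : lnorm ν ≤ M) :
    ν ∈ cube 0 M := by
  simp only [cube, Fintype.mem_piFinset, Finset.mem_Icc, Pi.zero_apply, zero_sub, zero_add,
    ← abs_le]
  exact fun ℓ =>
    (Finset.single_le_sum (fun i _ => abs_nonneg (ν i)) (Finset.mem_univ ℓ)).trans h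

lemma lnorm_nonneg {d : ℕ} (ν : Site d) : 0 ≤ lnorm ν :=
  Finset.sum_nonneg fun ℓ _ => abs_nonneg (ν ℓ)

lemma exp_one_add_lnorm_pos {d : ℕ} (ν : Site d) : 0 < exp 1 + lnorm ν := by
  have : (0 : ℝ) ≤ lnorm ν := mod_cast lnorm_nonneg ν
  positivity

lemma one_le_log_exp_one_add_lnorm {d : ℕ} (ν : Site d) : 1 ≤ log (exp 1 + lnorm ν) := by
  have : (0 : ℝ) ≤ lnorm ν := mod_cast lnorm_nonneg ν
  rw [le_log_iff_exp_le (exp_one_add_lnorm_pos ν)]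
  linarith

def IsAdmissible {d : ℕ} (ν : Site d) (k : ℕ) : Prop :=
  log (exp 1 + lnorm ν) ^ ((1 : ℝ) / d) < k

lemma IsAdmissible.one_lt {d : ℕ} {ν : Site d} {k : ℕ} (h : IsAdmissible ν k) : 1 < k := by
  have : (1 : ℝ) ≤ log (exp 1 + lnorm ν) ^ ((1 : ℝ) / d) :=
    one_le_rpow (one_le_log_exp_one_add_lnorm ν) (by positivity)
  exact_mod_cast this.trans_lt h

lemma IsAdmissible.lnorm_le {d : ℕ} (hd : 0 < d) {ν : Site d} {k : ℕ} (h : IsAdmissible ν k) :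
    lnorm ν ≤ ⌈exp ((k : ℝ) ^ d)⌉₊ := by
  have hlog : log (exp 1 + lnorm ν) < (k : ℝ) ^ d := by
    rw [IsAdmissible, one_div,
      rpow_inv_lt_iff_of_pos (by linarith [one_le_log_exp_one_add_lnorm ν]) (Nat.cast_nonneg k)
        (by positivity), rpow_natCast] at h
    exact h
  rw [log_lt_iff_lt_exp (exp_one_add_lnorm_pos ν)] at hlog
  have := Nat.le_ceil (exp ((k : ℝ) ^ d))
  have := exp_pos 1
  exact_mod_cast (by linarith : (lnorm ν : ℝ) ≤ ⌈exp ((k : ℝ) ^ d)⌉₊)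

lemma setOf_lt_Qen_subset {d : ℕ} (hd : 0 < d) (U : Polynomial ℝ) (K N : ℝ) :
    {x | ENNReal.ofReal N < Qen U K x} ⊆
      ⋃ j : ℕ, ⋃ ν ∈ cube (0 : Site d) ⌈exp (((j + 1 : ℕ) : ℝ) ^ d)⌉₊,
        {x | N * (2 * ((j + 1 : ℕ) : ℝ) + 1) ^ d < Wen U K ν (j + 1) x} := by
  intro x hx
  simp only [Set.mem_ofPred_eq, Qen, lt_iSup_iff] at hx
  obtain ⟨ν, k, hadm, hlt⟩ := hx
  have hadm : IsAdmissible ν k := hadm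
  obtain ⟨j, rfl⟩ : ∃ j, k = j + 1 := ⟨k - 1, by have := hadm.one_lt; omega⟩
  have hN : N < Wen U K ν (j + 1) x / (2 * ((j + 1 : ℕ) : ℝ) + 1) ^ d :=
    (ENNReal.ofReal_lt_ofReal_iff'.1 hlt).1
  simp only [Set.mem_iUnion]
  exact ⟨j, ν, mem_cube_zero_of_lnorm_le (hadm.lnorm_le hd),
    (lt_div_iff₀ (by positivity)).1 hN⟩

lemma two_mul_ceil_exp_add_one_le {s : ℝ} (hs : 0 ≤ s) :
    2 * (⌈exp s⌉₊ : ℝ) + 1 ≤ exp (2 + s) := by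
  have hceil : (⌈exp s⌉₊ : ℝ) < exp s + 1 := Nat.ceil_lt_add_one (exp_pos s).le
  have hs1 : 1 ≤ exp s := one_le_exp hs
  have he2 : 5 ≤ exp 2 := by
    have : exp 2 = exp 1 * exp 1 := by rw [← exp_add]; norm_num
    nlinarith [exp_one_gt_d9]
  rw [exp_add]
  nlinarith

lemma exponent_le {d k : ℕ} (hd : 0 < d) (hk : 1 ≤ k) {t : ℝ} (ht : 2 * d + 3 ≤ t) :
    d * (2 + (k : ℝ) ^ d) - t * (2 * k + 1) ^ d ≤ -t - k := by
  have hk1 : (1 : ℝ) ≤ k := mod_cast hk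
  have hkd : (k : ℝ) ≤ (k : ℝ) ^ d := le_self_pow₀ hk1 hd.ne'
  have h2d : (2 : ℝ) ≤ 2 ^ d := le_self_pow₀ one_le_two hd.ne'
  have hV : 2 * (k : ℝ) ^ d + 1 ≤ (2 * k + 1) ^ d := by
    have := pow_add_pow_le (by positivity : (0 : ℝ) ≤ 2 * k) zero_le_one hd.ne'
    rw [one_pow, mul_pow] at this
    nlinarith [pow_nonneg (Nat.cast_nonneg k : (0 : ℝ) ≤ k) d]
  have hd1 : (1 : ℝ) ≤ d := mod_cast hd
  nlinarith

lemma card_mul_exp_le {d k : ℕ} (hd : 0 < d) (hk : 1 ≤ k) {t : ℝ} (ht : 2 * d + 3 ≤ t) :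
    (2 * (⌈exp ((k : ℝ) ^ d)⌉₊ : ℝ) + 1) ^ d * exp (-t * (2 * k + 1) ^ d)
      ≤ exp (-t) / 2 ^ k := by
  have h2k : (2 : ℝ) ^ k ≤ exp k := by
    rw [← exp_one_pow]
    gcongr
    linarith [add_one_le_exp 1]
  calc (2 * (⌈exp ((k : ℝ) ^ d)⌉₊ : ℝ) + 1) ^ d * exp (-t * (2 * k + 1) ^ d)
      ≤ exp (2 + (k : ℝ) ^ d) ^ d * exp (-t * (2 * k + 1) ^ d) := by
        gcongr
        exact two_mul_ceil_exp_add_one_le (by positivity)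
    _ = exp (d * (2 + (k : ℝ) ^ d) - t * (2 * k + 1) ^ d) := by
        rw [← exp_nat_mul, ← exp_add]
        ring_nf
    _ ≤ exp (-t - k) := exp_le_exp.2 (exponent_le hd hk ht)
    _ = exp (-t) / exp k := exp_sub _ _
    _ ≤ exp (-t) / 2 ^ k := by gcongr

lemma Superstable.measure_lt_Qen_le {d : ℕ} (hd : 0 < d) {U : Polynomial ℝ} {K : ℝ}
    {ω : Measure (Conf d)} {Cw lam0 : ℝ} (hss : Superstable U K ω Cw lam0) (hlam0 : 0 < lam0)
    {N : ℝ} (hN : 2 * d + 3 ≤ lam0 * N - Cw) :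
    ω {x | ENNReal.ofReal N < Qen U K x} ≤ ENNReal.ofReal (exp (Cw - lam0 * N)) := by
  have hshell (j : ℕ) :
      ∑ ν ∈ cube (0 : Site d) ⌈exp (((j + 1 : ℕ) : ℝ) ^ d)⌉₊,
          ω {x | N * (2 * ((j + 1 : ℕ) : ℝ) + 1) ^ d < Wen U K ν (j + 1) x}
        ≤ ENNReal.ofReal (exp (Cw - lam0 * N) / 2 / 2 ^ j) := by
    calc _ ≤ ∑ ν ∈ cube (0 : Site d) ⌈exp (((j + 1 : ℕ) : ℝ) ^ d)⌉₊,
            ENNReal.ofReal (exp ((Cw - lam0 * N) * (2 * ((j + 1 : ℕ) : ℝ) + 1) ^ d)) :=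
          Finset.sum_le_sum fun ν _ => hss.measure_lt_Wen_le hlam0 ν (j + 1) N
      _ = ENNReal.ofReal ((2 * (⌈exp (((j + 1 : ℕ) : ℝ) ^ d)⌉₊ : ℝ) + 1) ^ d *
            exp (-(lam0 * N - Cw) * (2 * ((j + 1 : ℕ) : ℝ) + 1) ^ d)) := by
          rw [Finset.sum_const, card_cube, nsmul_eq_mul, ← ENNReal.ofReal_natCast,
            ← ENNReal.ofReal_mul (by positivity), neg_sub]
          push_cast
          rfl
      _ ≤ ENNReal.ofReal (exp (-(lam0 * N - Cw)) / 2 ^ (j + 1)) :=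
          ENNReal.ofReal_le_ofReal (card_mul_exp_le hd (Nat.le_add_left 1 j) hN)
      _ = ENNReal.ofReal (exp (Cw - lam0 * N) / 2 / 2 ^ j) := by
          rw [neg_sub, pow_succ', div_div]
  calc ω {x | ENNReal.ofReal N < Qen U K x}
      ≤ ω (⋃ j : ℕ, ⋃ ν ∈ cube (0 : Site d) ⌈exp (((j + 1 : ℕ) : ℝ) ^ d)⌉₊,
          {x | N * (2 * ((j + 1 : ℕ) : ℝ) + 1) ^ d < Wen U K ν (j + 1) x}) :=
        measure_mono (setOf_lt_Qen_subset hd U K N)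
    _ ≤ ∑' j : ℕ, ∑ ν ∈ cube (0 : Site d) ⌈exp (((j + 1 : ℕ) : ℝ) ^ d)⌉₊,
          ω {x | N * (2 * ((j + 1 : ℕ) : ℝ) + 1) ^ d < Wen U K ν (j + 1) x} :=
        (measure_iUnion_le _).trans (ENNReal.tsum_le_tsum fun j => measure_biUnion_finset_le _ _)
    _ ≤ ∑' j : ℕ, ENNReal.ofReal (exp (Cw - lam0 * N) / 2 / 2 ^ j) :=
        ENNReal.tsum_le_tsum hshell
    _ = ENNReal.ofReal (exp (Cw - lam0 * N)) := by
        rw [← ENNReal.ofReal_tsum_of_nonneg (fun j => by positivity) (summable_geometric_two' _),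
          tsum_geometric_two']

theorem statement3_general {d : ℕ} (hd : 0 < d) (U : Polynomial ℝ) (K : ℝ) (ω : Measure (Conf d))
    (Cw lam0 : ℝ) (hlam0 : 0 < lam0)
    (hss : Superstable U K ω Cw lam0) :
    ∃ lam1 > (0:ℝ), ∀ lam : ℝ, 0 < lam → lam ≤ lam1 →
      Tendsto (fun N : ℝ =>
          Real.exp (lam * N) * (ω {x | ENNReal.ofReal N < Qen U K x}).toReal)
        atTop (nhds 0) := by
  refine ⟨lam0 / 2, half_pos hlam0, fun lam _ hlam => ?_⟩
  have hbound : ∀ᶠ N in atTop, exp (lam * N) * (ω {x | ENNReal.ofReal N < Qen U K x}).toReal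
      ≤ exp (Cw + (lam - lam0) * N) := by
    filter_upwards [eventually_ge_atTop ((Cw + 2 * d + 3) / lam0)] with N hN
    have hN' : 2 * (d : ℝ) + 3 ≤ lam0 * N - Cw := by
      rw [div_le_iff₀ hlam0] at hN
      linarith
    calc exp (lam * N) * (ω {x | ENNReal.ofReal N < Qen U K x}).toReal
        ≤ exp (lam * N) * exp (Cw - lam0 * N) := by
          gcongr
          exact ENNReal.toReal_le_of_le_ofReal (exp_pos _).le
            (hss.measure_lt_Qen_le hd hlam0 hN')
      _ = exp (Cw + (lam - lam0) * N) := by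
          rw [← exp_add]
          ring_nf
  have hlim : Tendsto (fun N => exp (Cw + (lam - lam0) * N)) atTop (nhds 0) :=
    tendsto_exp_atBot.comp <| tendsto_atBot_add_const_left _ Cw <|
      (tendsto_const_mul_atBot_of_neg (by linarith)).2 tendsto_id
  exact squeeze_zero' (.of_forall fun N => by positivity) hbound hlim

/-- Exponential tail estimate: for every sufficiently small `λ > 0`,
`e^{λN} ω(Q > N) → 0` as `N → ∞`. -/
theorem statement3 {d : ℕ} (hd : 0 < d) (U : Polynomial ℝ) (hUdeg : U.degree = 4)
    (hUpos : ∀ y : ℝ, 0 ≤ U.eval y) (hUlead : 0 < U.leadingCoeff)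
    (K : ℝ) (hK : 0 < K)
    (ω : Measure (Conf d)) [IsProbabilityMeasure ω]
    (Cw lam0 : ℝ) (hCw : 0 < Cw) (hlam0 : 0 < lam0)
    (hss : Superstable U K ω Cw lam0) :
    ∃ lam1 > (0:ℝ), ∀ lam : ℝ, 0 < lam → lam ≤ lam1 →
      Tendsto (fun N : ℝ =>
          Real.exp (lam * N) * (ω {x | ENNReal.ofReal N < Qen U K x}).toReal)
        atTop (nhds 0) :=
  statement3_general hd U K ω Cw lam0 hlam0 hss
end
end

section
/- Quantitative tail bound: if ω is a Borel probability measure on X satisfying the superstability estimate with constants C_ω, λ₀, then there exist constants C > 0 and N₀ > 0 (depending only on d, C_ω, λ₀) such that for every N ≥ N₀, ω({x : Q(x) > N}) ≤ C e^{−N λ₀/4}. -/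
open MeasureTheory Real Filter
open scoped ENNReal

noncomputable section

lemma measurable_Wen {d : ℕ} (U : Polynomial ℝ) (K : ℝ) (ν : Site d) (k : ℕ) :
    Measurable (Wen U K ν k) := by
  have hU : Measurable fun y : ℝ => U.eval y := U.continuous.measurable
  unfold Wen
  refine (Finset.measurable_sum _ fun i _ => by fun_prop).add
    ((Finset.measurable_sum _ fun i _ => Finset.measurable_sum _ fun j _ => ?_).const_mul _)
  split_ifs <;> fun_prop

lemma ENNReal.tsum_fin_pi_prod {β : Type*} (m : ℕ) (F : β → ℝ≥0∞) :
    ∑' ν : Fin m → β, ∏ ℓ, F (ν ℓ) = (∑' n, F n) ^ m := by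
  induction m with
  | zero => simp
  | succ m ih =>
    rw [← (Fin.consEquiv fun _ => β).tsum_eq, ENNReal.tsum_prod', pow_succ', ← ih,
      ← ENNReal.tsum_mul_right]
    refine tsum_congr fun a => ?_
    rw [← ENNReal.tsum_mul_left]
    exact tsum_congr fun ν => by simp [Fin.consEquiv, Fin.prod_univ_succ]

def latticeWeight (n : ℤ) : ℝ := ((1 + |(n : ℝ)|) ^ 2)⁻¹

lemma latticeWeight_nonneg (n : ℤ) : 0 ≤ latticeWeight n := by
  unfold latticeWeight; positivity

lemma summable_latticeWeight : Summable latticeWeight := by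
  refine (summable_one_div_int_pow.2 one_lt_two).of_norm_bounded_eventually ?_
  filter_upwards [eventually_cofinite_ne 0] with n hn
  have hn' : (0 : ℝ) < |(n : ℝ)| := by positivity
  rw [Real.norm_of_nonneg (latticeWeight_nonneg n), latticeWeight, one_div, ← sq_abs (n : ℝ)]
  gcongr
  linarith

lemma tsum_latticeWeight_pos : 0 < ∑' n, latticeWeight n :=
  summable_latticeWeight.tsum_pos latticeWeight_nonneg 0 (by simp [latticeWeight])

lemma exp_neg_mul_log_le_prod_latticeWeight {d : ℕ} (ν : Site d) :
    exp (-(2 * d) * log (exp 1 + lnorm ν)) ≤ ∏ ℓ, latticeWeight (ν ℓ) := by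
  have hnorm : (0 : ℝ) ≤ lnorm ν := mod_cast lnorm_nonneg ν
  have hcoord (ℓ : Fin d) : 1 + |(ν ℓ : ℝ)| ≤ exp 1 + lnorm ν := by
    have : |(ν ℓ : ℝ)| ≤ lnorm ν := mod_cast
      Finset.single_le_sum (f := fun i => |ν i|) (fun i _ => abs_nonneg (ν i)) (Finset.mem_univ ℓ)
    linarith [add_one_le_exp 1]
  calc exp (-(2 * d) * log (exp 1 + lnorm ν))
      = ((exp 1 + lnorm ν) ^ (2 * d))⁻¹ := by
        rw [neg_mul, exp_neg, ← Nat.cast_ofNat, ← Nat.cast_mul, exp_nat_mul,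
          exp_log (by positivity)]
    _ ≤ (∏ ℓ, (1 + |(ν ℓ : ℝ)|) ^ 2)⁻¹ := by
        gcongr
        calc ∏ ℓ, (1 + |(ν ℓ : ℝ)|) ^ 2 ≤ ∏ _ℓ : Fin d, (exp 1 + lnorm ν) ^ 2 :=
              Finset.prod_le_prod (fun ℓ _ => by positivity) fun ℓ _ =>
                pow_le_pow_left₀ (by positivity) (hcoord ℓ) 2
          _ = (exp 1 + lnorm ν) ^ (2 * d) := by simp [pow_mul]
    _ = ∏ ℓ, latticeWeight (ν ℓ) := by simp [latticeWeight, Finset.prod_inv_distrib]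

lemma exp_neg_natCast_le_inv_two_pow (n : ℕ) : exp (-n) ≤ 2⁻¹ ^ n := by
  rw [← neg_one_mul, mul_comm, exp_nat_mul, exp_neg]
  gcongr
  linarith [add_one_le_exp 1]

lemma le_two_mul_add_one_pow_of_rpow_lt {d : ℕ} (hd : 0 < d) {L : ℝ} (hL : 0 ≤ L) {k : ℕ}
    (h : L ^ ((1 : ℝ) / d) < k) : L ≤ (2 * (k : ℝ) + 1) ^ d :=
  calc L = (L ^ ((1 : ℝ) / d)) ^ d := by rw [one_div, rpow_inv_natCast_pow hL hd.ne']
    _ ≤ (2 * (k : ℝ) + 1) ^ d := by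
        gcongr
        linarith

lemma natCast_add_one_le_two_mul_add_one_pow {d : ℕ} (hd : 0 < d) (k : ℕ) :
    (k : ℝ) + 1 ≤ (2 * (k : ℝ) + 1) ^ d :=
  calc (k : ℝ) + 1 ≤ 2 * k + 1 := by linarith [k.cast_nonneg (α := ℝ)]
    _ ≤ (2 * (k : ℝ) + 1) ^ d := le_self_pow₀ (by linarith [k.cast_nonneg (α := ℝ)]) hd.ne'

lemma tsum_tsum_ofReal_latticeWeight_mul_inv_two_pow (d : ℕ) (A : ℝ≥0∞) :
    ∑' (ν : Site d) (k : ℕ), A * (∏ ℓ, ENNReal.ofReal (latticeWeight (ν ℓ))) * 2⁻¹ ^ (k + 1)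
      = A * ENNReal.ofReal (∑' n, latticeWeight n) ^ d := by
  simp_rw [ENNReal.tsum_mul_left, ENNReal.tsum_geometric_add_one, ENNReal.one_sub_inv_two, inv_inv,
    ENNReal.inv_mul_cancel two_ne_zero ENNReal.ofNat_ne_top, mul_one]
  rw [ENNReal.tsum_mul_left, ENNReal.tsum_fin_pi_prod d (fun n => ENNReal.ofReal (latticeWeight n)),
    ENNReal.ofReal_tsum_of_nonneg latticeWeight_nonneg summable_latticeWeight]

lemma setOf_ofReal_lt_Qen_subset {d : ℕ} (U : Polynomial ℝ) (K : ℝ) {N : ℝ} (hN : 0 ≤ N) :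
    {x : Conf d | ENNReal.ofReal N < Qen U K x} ⊆ ⋃ (ν : Site d) (k : ℕ),
      {x | log (exp 1 + lnorm ν) ^ ((1 : ℝ) / d) < k ∧
        N * (2 * (k : ℝ) + 1) ^ d < Wen U K ν k x} := by
  intro x (hx : ENNReal.ofReal N < Qen U K x)
  simp only [Qen, lt_iSup_iff] at hx
  obtain ⟨ν, k, hk, hlt⟩ := hx
  rw [ENNReal.ofReal_lt_ofReal_iff_of_nonneg hN, lt_div_iff₀ (by positivity)] at hlt
  exact Set.mem_iUnion₂.2 ⟨ν, k, hk, hlt⟩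

namespace Superstable

variable {d : ℕ} {U : Polynomial ℝ} {K : ℝ} {ω : Measure (Conf d)} {Cw lam0 : ℝ}

lemma measure_lt_Wen_le_s4 (hss : Superstable U K ω Cw lam0) (hlam0 : 0 < lam0) (ν : Site d)
    (k : ℕ) (a : ℝ) :
    ω {x | a < Wen U K ν k x}
      ≤ ENNReal.ofReal (exp (Cw * (2 * (k : ℝ) + 1) ^ d - lam0 * a)) := by
  have hW := measurable_Wen U K ν k
  calc ω {x | a < Wen U K ν k x}
      ≤ ω {x | ENNReal.ofReal (exp (lam0 * a)) ≤ ENNReal.ofReal (exp (lam0 * Wen U K ν k x))} :=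
        measure_mono fun x (hx : a < _) =>
          show ENNReal.ofReal _ ≤ ENNReal.ofReal _ by gcongr
    _ ≤ (∫⁻ x, ENNReal.ofReal (exp (lam0 * Wen U K ν k x)) ∂ω) / ENNReal.ofReal (exp (lam0 * a)) :=
        meas_ge_le_lintegral_div (by fun_prop) (by positivity) ENNReal.ofReal_ne_top
    _ ≤ ENNReal.ofReal (exp (Cw * (2 * (k : ℝ) + 1) ^ d)) / ENNReal.ofReal (exp (lam0 * a)) := by
        gcongr; exact hss ν k lam0 hlam0 le_rfl
    _ = _ := by rw [← ENNReal.ofReal_div_of_pos (exp_pos _), ← exp_sub]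

lemma measure_admissible_event_le (hss : Superstable U K ω Cw lam0) (hd : 0 < d) (hCw : 0 ≤ Cw)
    (hlam0 : 0 < lam0) {N : ℝ} (hN : Cw + 2 * d + 1 ≤ N * lam0 / 4) (ν : Site d) (k : ℕ) :
    ω {x | log (exp 1 + lnorm ν) ^ ((1 : ℝ) / d) < k ∧
        N * (2 * (k : ℝ) + 1) ^ d < Wen U K ν k x}
      ≤ ENNReal.ofReal (exp (-(N * lam0) / 4)) * (∏ ℓ, ENNReal.ofReal (latticeWeight (ν ℓ))) *
          2⁻¹ ^ (k + 1) := by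
  set L := log (exp 1 + lnorm ν)
  set V := (2 * (k : ℝ) + 1) ^ d
  by_cases hk : L ^ ((1 : ℝ) / d) < k
  swap
  · simp only [hk, false_and, Set.ofPred_false, measure_empty, zero_le]
  have hL : 0 ≤ L := by
    have : (0 : ℝ) ≤ lnorm ν := mod_cast lnorm_nonneg ν
    exact log_nonneg (by linarith [add_one_le_exp 1])
  have hw : 0 ≤ ∏ ℓ, latticeWeight (ν ℓ) := Finset.prod_nonneg fun ℓ _ => latticeWeight_nonneg _
  have hLV : L ≤ V := le_two_mul_add_one_pow_of_rpow_lt hd hL hk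
  have hkV : (k : ℝ) + 1 ≤ V := natCast_add_one_le_two_mul_add_one_pow hd k
  have hexponent :
      Cw * V - lam0 * (N * V) ≤ -(N * lam0) / 4 + -(2 * d) * L + -((k + 1 : ℕ) : ℝ) := by
    push_cast
    nlinarith [mul_le_mul_of_nonneg_left hLV (by positivity : (0 : ℝ) ≤ 2 * d),
      mul_le_mul_of_nonneg_right hN (by linarith : (0 : ℝ) ≤ V - 1),
      mul_le_mul_of_nonneg_right hN (by linarith : (0 : ℝ) ≤ V)]
  calc ω {x | L ^ ((1 : ℝ) / d) < k ∧ N * V < Wen U K ν k x}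
      ≤ ω {x | N * V < Wen U K ν k x} := measure_mono fun x hx => hx.2
    _ ≤ ENNReal.ofReal (exp (Cw * V - lam0 * (N * V))) := hss.measure_lt_Wen_le_s4 hlam0 ν k _
    _ ≤ ENNReal.ofReal (exp (-(N * lam0) / 4) * exp (-(2 * d) * L) * exp (-((k + 1 : ℕ) : ℝ))) := by
        rw [← exp_add, ← exp_add]
        gcongr
    _ ≤ ENNReal.ofReal (exp (-(N * lam0) / 4) * (∏ ℓ, latticeWeight (ν ℓ)) * 2⁻¹ ^ (k + 1)) := by
        gcongr
        · exact exp_neg_mul_log_le_prod_latticeWeight ν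
        · exact exp_neg_natCast_le_inv_two_pow (k + 1)
    _ = _ := by
        rw [ENNReal.ofReal_mul (mul_nonneg (exp_pos _).le hw), ENNReal.ofReal_mul (exp_pos _).le,
          ENNReal.ofReal_prod_of_nonneg fun ℓ _ => latticeWeight_nonneg _, ENNReal.ofReal_pow,
          ENNReal.ofReal_inv_of_pos two_pos, ENNReal.ofReal_ofNat]
        norm_num

end Superstable

/-- Quantitative tail bound: `ω(Q > N) ≤ C e^{-N λ₀/4}` for `N ≥ N₀`, with constants
`C`, `N₀` depending only on `d`, `C_ω`, `λ₀`. -/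
theorem statement4 {d : ℕ} (hd : 0 < d) (Cw lam0 : ℝ) (hCw : 0 < Cw) (hlam0 : 0 < lam0) :
    ∃ C > (0:ℝ), ∃ N₀ > (0:ℝ),
      ∀ (U : Polynomial ℝ), U.degree = 4 → (∀ y : ℝ, 0 ≤ U.eval y) →
        0 < U.leadingCoeff → ∀ K : ℝ, 0 < K →
      ∀ ω : Measure (Conf d), IsProbabilityMeasure ω → Superstable U K ω Cw lam0 →
      ∀ N : ℝ, N₀ ≤ N →
        ω {x | ENNReal.ofReal N < Qen U K x} ≤
          ENNReal.ofReal (C * Real.exp (-(N * lam0) / 4)) := by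
  refine ⟨(∑' n, latticeWeight n) ^ d, pow_pos tsum_latticeWeight_pos d,
    4 * (Cw + 2 * d + 1) / lam0, by positivity, ?_⟩
  intro U _ _ _ K _ ω _ hss N hN
  have hN0 : 0 ≤ N := le_trans (by positivity) hN
  have hN' : Cw + 2 * d + 1 ≤ N * lam0 / 4 := by
    rw [div_le_iff₀ hlam0] at hN
    linarith
  calc ω {x | ENNReal.ofReal N < Qen U K x}
      ≤ ∑' (ν : Site d) (k : ℕ), ENNReal.ofReal (exp (-(N * lam0) / 4)) *
          (∏ ℓ, ENNReal.ofReal (latticeWeight (ν ℓ))) * 2⁻¹ ^ (k + 1) := by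
        refine (measure_mono (setOf_ofReal_lt_Qen_subset U K hN0)).trans ?_
        refine (measure_iUnion_le _).trans (ENNReal.tsum_le_tsum fun ν => ?_)
        exact (measure_iUnion_le _).trans (ENNReal.tsum_le_tsum fun k =>
          hss.measure_admissible_event_le hd hCw.le hlam0 hN' ν k)
    _ = ENNReal.ofReal (exp (-(N * lam0) / 4)) * ENNReal.ofReal (∑' n, latticeWeight n) ^ d :=
        tsum_tsum_ofReal_latticeWeight_mul_inv_two_pow d _
    _ = ENNReal.ofReal ((∑' n, latticeWeight n) ^ d * exp (-(N * lam0) / 4)) := by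
        rw [mul_comm, ← ENNReal.ofReal_pow tsum_latticeWeight_pos.le,
          ← ENNReal.ofReal_mul (pow_pos tsum_latticeWeight_pos d).le]
end
end

section
/- Tail series estimate: for every α > 1/2, every δ ∈ (1, 4α − 1), and every constants C₁ > 0 and b > 0, one has lim_{t→∞} sup_{m∈ℕ, m > t (log t)^α} e^{bt} (1+t) Σ_{n=m}^∞ ( C₁ t² ( log(e+n) · (log t)^δ · log log t )^{1/2} / n² )^n = 0. In fact, the double supremum/series expression is bounded by exp(−t (log t)^{1/2}) for all sufficiently large t. -/
open Real Filter

set_option maxHeartbeats 1000000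

/-- For `1 ≤ y ≤ x`, `log(e+x)/x ≤ log(e+y)/y` (cleared denominators). -/
private lemma log_ratio_aux {x y : ℝ} (hy : 1 ≤ y) (hxy : y ≤ x) :
    y * Real.log (Real.exp 1 + x) ≤ x * Real.log (Real.exp 1 + y) := by
  have he : (0:ℝ) < Real.exp 1 := Real.exp_pos 1
  have hey : (0:ℝ) < Real.exp 1 + y := by linarith
  have hex : (0:ℝ) < Real.exp 1 + x := by linarith
  have h1 : Real.log (Real.exp 1 + x) - Real.log (Real.exp 1 + y)
      ≤ (x - y) / (Real.exp 1 + y) := by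
    rw [← Real.log_div (ne_of_gt hex) (ne_of_gt hey)]
    have h := Real.log_le_sub_one_of_pos (div_pos hex hey)
    have heq : (Real.exp 1 + x) / (Real.exp 1 + y) - 1 = (x - y) / (Real.exp 1 + y) := by
      field_simp; ring
    linarith [heq ▸ h]
  have h2 : 1 ≤ Real.log (Real.exp 1 + y) := by
    calc (1:ℝ) = Real.log (Real.exp 1) := (Real.log_exp 1).symm
      _ ≤ Real.log (Real.exp 1 + y) := Real.log_le_log he (by linarith)
  have h3 : y * ((x - y) / (Real.exp 1 + y)) ≤ x - y := by
    have hq : y / (Real.exp 1 + y) ≤ 1 := by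
      rw [div_le_one hey]; linarith
    calc y * ((x - y) / (Real.exp 1 + y)) = (x - y) * (y / (Real.exp 1 + y)) := by ring
      _ ≤ (x - y) * 1 := mul_le_mul_of_nonneg_left hq (by linarith)
      _ = x - y := mul_one _
  have hy0 : (0:ℝ) ≤ y := by linarith
  have h4 := mul_le_mul_of_nonneg_left h1 hy0
  have h5 := mul_le_mul_of_nonneg_left h2 (by linarith : (0:ℝ) ≤ x - y)
  nlinarith [h4, h3, h5]

/-- The main eventual bound. -/
private lemma key_event (α δ C₁ b : ℝ) (hα : 1/2 < α) (hδl : 1 < δ) (hδu : δ < 4*α - 1)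
    (hC₁ : 0 < C₁) (hb : 0 < b) :
    ∀ᶠ t : ℝ in atTop, ∀ m : ℕ, t * Real.log t ^ α < (m : ℝ) →
      Real.exp (b * t) * (1 + t) *
        (∑' n : ℕ, if m ≤ n then
            (C₁ * t ^ 2 *
              Real.sqrt (Real.log (Real.exp 1 + (n:ℝ)) * Real.log t ^ δ *
                Real.log (Real.log t)) / (n:ℝ) ^ 2) ^ n
          else 0) ≤ Real.exp (-(t * Real.sqrt (Real.log t))) := by
  -- eventual conditions
  have hc1 : ∀ᶠ t : ℝ in atTop, Real.exp 1 ≤ t := eventually_ge_atTop _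
  have hc2 : ∀ᶠ t : ℝ in atTop, Real.log t ^ α ≤ t := by
    have hbnd := Real.isLittleO_log_id_atTop.bound
        (c := 1/(|α|+1)) (by positivity)
    have hcomp := Real.tendsto_log_atTop.eventually hbnd
    filter_upwards [hcomp, eventually_ge_atTop (Real.exp 1)] with t h1 h2
    have ht0 : (0:ℝ) < t := lt_of_lt_of_le (Real.exp_pos 1) h2
    have hL1 : 1 ≤ Real.log t := by
      calc (1:ℝ) = Real.log (Real.exp 1) := (Real.log_exp 1).symm
        _ ≤ Real.log t := Real.log_le_log (Real.exp_pos 1) h2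
    have hL0 : 0 < Real.log t := by linarith
    have hLL0 : 0 ≤ Real.log (Real.log t) := Real.log_nonneg hL1
    have h1' : Real.log (Real.log t) ≤ 1/(|α|+1) * Real.log t := by
      have := h1
      simp only [id, Real.norm_eq_abs] at this
      rwa [abs_of_nonneg hLL0, abs_of_nonneg hL0.le] at this
    have hαabs : α ≤ |α| := le_abs_self α
    have key : α * Real.log (Real.log t) ≤ Real.log t := by
      have h6 : α * Real.log (Real.log t) ≤ |α| * Real.log (Real.log t) :=
        mul_le_mul_of_nonneg_right hαabs hLL0
      have h7 : |α| * Real.log (Real.log t) ≤ |α| * (1/(|α|+1) * Real.log t) :=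
        mul_le_mul_of_nonneg_left h1' (abs_nonneg α)
      have h8 : |α| * (1/(|α|+1) * Real.log t) ≤ Real.log t := by
        have hpos : (0:ℝ) < |α| + 1 := by positivity
        rw [div_mul_eq_mul_div, mul_div_assoc', div_le_iff₀ hpos]
        nlinarith [abs_nonneg α, hL0.le]
      linarith
    calc Real.log t ^ α = Real.exp (Real.log (Real.log t) * α) :=
          Real.rpow_def_of_pos hL0 α
      _ ≤ Real.exp (Real.log t) := Real.exp_le_exp.mpr (by linarith [key])
      _ = t := Real.exp_log ht0
  have hc3 : ∀ᶠ t : ℝ in atTop, Real.exp 1 + t^2 ≤ t^3 := by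
    filter_upwards [eventually_ge_atTop (3:ℝ)] with t ht
    nlinarith [Real.exp_one_lt_d9]
  have hc4 : ∀ᶠ t : ℝ in atTop,
      3 * Real.log t ^ ((1:ℝ)+δ) * Real.log (Real.log t)
        ≤ (Real.exp (-3)/C₁)^2 * Real.log t ^ (4*α) := by
    set γ : ℝ := 4*α - 1 - δ with hγdef
    have hγ : 0 < γ := by simp only [hγdef]; linarith
    set K : ℝ := (Real.exp (-3)/C₁)^2 / 3 with hKdef
    have hK : 0 < K := by positivity
    have hx : ∀ᶠ x : ℝ in atTop,
        3 * x ^ ((1:ℝ)+δ) * Real.log x ≤ (Real.exp (-3)/C₁)^2 * x ^ (4*α) := by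
      have hlo := (isLittleO_log_rpow_atTop hγ).bound (c := K) hK
      filter_upwards [hlo, eventually_ge_atTop (1:ℝ)] with x hb1 hx1
      have hx0 : (0:ℝ) < x := by linarith
      have hlx : 0 ≤ Real.log x := Real.log_nonneg hx1
      have hxγ : 0 ≤ x ^ γ := Real.rpow_nonneg hx0.le γ
      have hb2 : Real.log x ≤ K * x ^ γ := by
        simp only [Real.norm_eq_abs] at hb1
        rwa [abs_of_nonneg hlx, abs_of_nonneg hxγ] at hb1
      have hpow : x ^ ((1:ℝ)+δ) * x ^ γ = x ^ (4*α) := by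
        rw [← Real.rpow_add hx0]
        congr 1
        simp only [hγdef]; ring
      have hnn : 0 ≤ x ^ ((1:ℝ)+δ) := Real.rpow_nonneg hx0.le _
      calc 3 * x ^ ((1:ℝ)+δ) * Real.log x ≤ 3 * x ^ ((1:ℝ)+δ) * (K * x ^ γ) :=
            mul_le_mul_of_nonneg_left hb2 (by positivity)
        _ = (3 * K) * (x ^ ((1:ℝ)+δ) * x ^ γ) := by ring
        _ = (Real.exp (-3)/C₁)^2 * x ^ (4*α) := by
            rw [hpow, hKdef]; field_simp
    exact Real.tendsto_log_atTop.eventually hx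
  have hc5 : ∀ᶠ t : ℝ in atTop,
      b*t + Real.log (1+t) + Real.log 2 ≤ 2*(t * Real.sqrt (Real.log t)) := by
    have hsq : ∀ᶠ t : ℝ in atTop, (b+2)^2 ≤ Real.log t :=
      Real.tendsto_log_atTop.eventually (eventually_ge_atTop _)
    filter_upwards [hsq, eventually_ge_atTop (1:ℝ)] with t h1 h2
    have hs : b + 2 ≤ Real.sqrt (Real.log t) := by
      calc b + 2 = Real.sqrt ((b+2)^2) := (Real.sqrt_sq (by linarith)).symm
        _ ≤ Real.sqrt (Real.log t) := Real.sqrt_le_sqrt h1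
    have hlog1t : Real.log (1+t) ≤ t := by
      have := Real.log_le_sub_one_of_pos (by linarith : (0:ℝ) < 1+t)
      linarith
    have hlog2 : Real.log 2 ≤ 1 := by
      calc Real.log 2 ≤ Real.log (Real.exp 1) :=
            Real.log_le_log (by norm_num) (by nlinarith [Real.exp_one_gt_d9])
        _ = 1 := Real.log_exp 1
    have ht2 : t * (b+2) ≤ t * Real.sqrt (Real.log t) :=
      mul_le_mul_of_nonneg_left hs (by linarith)
    nlinarith [ht2]
  filter_upwards [hc1, hc2, hc3, hc4, hc5] with t h1 h2 h3 h4 h5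
  intro m hm
  -- basic facts
  have he2 : (2:ℝ) ≤ Real.exp 1 := by nlinarith [Real.exp_one_gt_d9]
  have ht1 : (1:ℝ) ≤ t := by linarith
  have ht0 : (0:ℝ) < t := by linarith
  have hL1 : 1 ≤ Real.log t := by
    calc (1:ℝ) = Real.log (Real.exp 1) := (Real.log_exp 1).symm
      _ ≤ Real.log t := Real.log_le_log (Real.exp_pos 1) h1
  have hL0 : 0 < Real.log t := by linarith
  have hLL0 : 0 ≤ Real.log (Real.log t) := Real.log_nonneg hL1
  set L : ℝ := Real.log t with hLdef
  set A : ℝ := L ^ δ * Real.log L with hAdef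
  have hA0 : 0 ≤ A := mul_nonneg (Real.rpow_nonneg hL0.le δ) hLL0
  set M : ℝ := t * L ^ α with hMdef
  have hLα1 : 1 ≤ L ^ α := Real.one_le_rpow hL1 (by linarith)
  have hM1 : 1 ≤ M := by
    calc (1:ℝ) = 1 * 1 := by norm_num
      _ ≤ t * L ^ α := mul_le_mul ht1 hLα1 (by norm_num) ht0.le
  have hM0 : 0 < M := by linarith
  have hMm : M < (m:ℝ) := hm
  set r : ℝ := Real.exp (-3) with hrdef
  have hr0 : 0 < r := Real.exp_pos _
  have hr1 : r < 1 := Real.exp_lt_one_iff.mpr (by norm_num)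
  have hrhalf : r ≤ 1/2 := by
    have h4' : (4:ℝ) ≤ Real.exp 3 := by nlinarith [Real.add_one_le_exp (3:ℝ)]
    rw [hrdef, Real.exp_neg]
    rw [inv_le_comm₀ (by linarith) (by norm_num)]
    linarith
  -- the bound C₁ t² √(log(e+M)·A) ≤ r·M²
  have hMt2 : M ≤ t^2 := by
    calc M = t * L ^ α := hMdef
      _ ≤ t * t := mul_le_mul_of_nonneg_left h2 ht0.le
      _ = t^2 := by ring
  have hlogM3 : Real.log (Real.exp 1 + M) ≤ 3 * L := by
    calc Real.log (Real.exp 1 + M) ≤ Real.log (t^3) :=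
          Real.log_le_log (by positivity) (by nlinarith [h3, hMt2])
      _ = 3 * L := by rw [Real.log_pow]; push_cast; rw [hLdef]
  have hBM : C₁ * t^2 * Real.sqrt (Real.log (Real.exp 1 + M) * A) ≤ r * M^2 := by
    have hz0 : 0 ≤ r/C₁ * (L ^ α)^2 := by positivity
    have hL4 : ((L ^ α)^2)^2 = L ^ (4*α) := by
      rw [← Real.rpow_natCast (L ^ α) 2, ← Real.rpow_mul hL0.le,
        ← Real.rpow_natCast (L ^ (α * (2:ℕ))) 2, ← Real.rpow_mul hL0.le]
      congr 1
      push_cast; ring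
    have hLd : L ^ ((1:ℝ)+δ) = L * L ^ δ := by
      rw [Real.rpow_add hL0, Real.rpow_one]
    have hkey : Real.log (Real.exp 1 + M) * A ≤ (r/C₁ * (L ^ α)^2)^2 := by
      calc Real.log (Real.exp 1 + M) * A ≤ (3*L) * A :=
            mul_le_mul_of_nonneg_right hlogM3 hA0
        _ = 3 * L ^ ((1:ℝ)+δ) * Real.log L := by rw [hLd, hAdef]; ring
        _ ≤ (Real.exp (-3)/C₁)^2 * L ^ (4*α) := h4
        _ = (r/C₁ * (L ^ α)^2)^2 := by rw [mul_pow, hL4, hrdef]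
    have hs : Real.sqrt (Real.log (Real.exp 1 + M) * A) ≤ r/C₁ * (L ^ α)^2 := by
      calc Real.sqrt (Real.log (Real.exp 1 + M) * A)
          ≤ Real.sqrt ((r/C₁ * (L ^ α)^2)^2) := Real.sqrt_le_sqrt hkey
        _ = r/C₁ * (L ^ α)^2 := Real.sqrt_sq hz0
    calc C₁ * t^2 * Real.sqrt (Real.log (Real.exp 1 + M) * A)
        ≤ C₁ * t^2 * (r/C₁ * (L ^ α)^2) := mul_le_mul_of_nonneg_left hs (by positivity)
      _ = r * (t * L ^ α)^2 := by field_simp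
      _ = r * M^2 := by rw [← hMdef]
  -- per-term bound
  have hbase : ∀ n : ℕ, m ≤ n →
      C₁ * t ^ 2 * Real.sqrt (Real.log (Real.exp 1 + (n:ℝ)) * L ^ δ *
        Real.log L) / (n:ℝ) ^ 2 ≤ r := by
    intro n hn
    have hnM : M ≤ (n:ℝ) := le_trans hMm.le (Nat.cast_le.mpr hn)
    have hn0 : (0:ℝ) < (n:ℝ) := by linarith
    have hratio := log_ratio_aux (x := (n:ℝ)) (y := M) hM1 hnM
    have hlogM0 : 0 ≤ Real.log (Real.exp 1 + M) :=
      Real.log_nonneg (by nlinarith [Real.exp_pos 1])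
    have hlogn0 : 0 ≤ Real.log (Real.exp 1 + (n:ℝ)) :=
      Real.log_nonneg (by nlinarith [Real.exp_pos 1])
    have hYM0 : 0 ≤ Real.log (Real.exp 1 + M) * A := mul_nonneg hlogM0 hA0
    have hYn0 : 0 ≤ Real.log (Real.exp 1 + (n:ℝ)) * A := mul_nonneg hlogn0 hA0
    have hsq : Real.log (Real.exp 1 + (n:ℝ)) * A * (M^2)^2
        ≤ Real.log (Real.exp 1 + M) * A * (((n:ℝ))^2)^2 := by
      have s1 : Real.log (Real.exp 1 + (n:ℝ)) * A * (M^2)^2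
          = (M * Real.log (Real.exp 1 + (n:ℝ))) * (A * M^3) := by ring
      have s2 : (M * Real.log (Real.exp 1 + (n:ℝ))) * (A * M^3)
          ≤ ((n:ℝ) * Real.log (Real.exp 1 + M)) * (A * M^3) :=
        mul_le_mul_of_nonneg_right hratio (by positivity)
      have s3 : ((n:ℝ) * Real.log (Real.exp 1 + M)) * (A * M^3)
          = (Real.log (Real.exp 1 + M) * A) * ((n:ℝ) * M^3) := by ring
      have s4 : (n:ℝ) * M^3 ≤ (n:ℝ) * (n:ℝ)^3 :=
        mul_le_mul_of_nonneg_left (pow_le_pow_left₀ hM0.le hnM 3) hn0.le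
      have s5 : (Real.log (Real.exp 1 + M) * A) * ((n:ℝ) * M^3)
          ≤ (Real.log (Real.exp 1 + M) * A) * ((n:ℝ) * (n:ℝ)^3) :=
        mul_le_mul_of_nonneg_left s4 hYM0
      calc Real.log (Real.exp 1 + (n:ℝ)) * A * (M^2)^2
          = (M * Real.log (Real.exp 1 + (n:ℝ))) * (A * M^3) := s1
        _ ≤ ((n:ℝ) * Real.log (Real.exp 1 + M)) * (A * M^3) := s2
        _ = (Real.log (Real.exp 1 + M) * A) * ((n:ℝ) * M^3) := s3
        _ ≤ (Real.log (Real.exp 1 + M) * A) * ((n:ℝ) * (n:ℝ)^3) := s5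
        _ = Real.log (Real.exp 1 + M) * A * (((n:ℝ))^2)^2 := by ring
    have hstep : Real.sqrt (Real.log (Real.exp 1 + (n:ℝ)) * A) * M^2
        ≤ Real.sqrt (Real.log (Real.exp 1 + M) * A) * ((n:ℝ))^2 := by
      have e1 : Real.sqrt (Real.log (Real.exp 1 + (n:ℝ)) * A) * M^2
          = Real.sqrt (Real.log (Real.exp 1 + (n:ℝ)) * A * (M^2)^2) := by
        rw [Real.sqrt_mul hYn0, Real.sqrt_sq (by positivity)]
      have e2 : Real.sqrt (Real.log (Real.exp 1 + M) * A) * ((n:ℝ))^2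
          = Real.sqrt (Real.log (Real.exp 1 + M) * A * (((n:ℝ))^2)^2) := by
        rw [Real.sqrt_mul hYM0, Real.sqrt_sq (by positivity)]
      rw [e1, e2]
      exact Real.sqrt_le_sqrt hsq
    rw [div_le_iff₀ (by positivity : (0:ℝ) < ((n:ℝ))^2)]
    have h6 : C₁ * t^2 * Real.sqrt (Real.log (Real.exp 1 + (n:ℝ)) * A) * M^2
        ≤ (r * ((n:ℝ))^2) * M^2 := by
      calc C₁ * t^2 * Real.sqrt (Real.log (Real.exp 1 + (n:ℝ)) * A) * M^2
          = (C₁ * t^2) * (Real.sqrt (Real.log (Real.exp 1 + (n:ℝ)) * A) * M^2) := by ring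
        _ ≤ (C₁ * t^2) * (Real.sqrt (Real.log (Real.exp 1 + M) * A) * ((n:ℝ))^2) :=
            mul_le_mul_of_nonneg_left hstep (by positivity)
        _ = (C₁ * t^2 * Real.sqrt (Real.log (Real.exp 1 + M) * A)) * ((n:ℝ))^2 := by ring
        _ ≤ (r * M^2) * ((n:ℝ))^2 := mul_le_mul_of_nonneg_right hBM (by positivity)
        _ = (r * ((n:ℝ))^2) * M^2 := by ring
    have h7 := le_of_mul_le_mul_right h6 (by positivity : (0:ℝ) < M^2)
    calc C₁ * t ^ 2 * Real.sqrt (Real.log (Real.exp 1 + (n:ℝ)) * L ^ δ * Real.log L)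
        = C₁ * t ^ 2 * Real.sqrt (Real.log (Real.exp 1 + (n:ℝ)) * A) := by
          rw [hAdef, mul_assoc (Real.log (Real.exp 1 + (n:ℝ)))]
      _ ≤ r * ((n:ℝ))^2 := h7
  -- sum manipulation
  set f : ℕ → ℝ := fun n => if m ≤ n then
      (C₁ * t ^ 2 * Real.sqrt (Real.log (Real.exp 1 + (n:ℝ)) * L ^ δ *
        Real.log L) / (n:ℝ) ^ 2) ^ n else 0 with hfdef
  set g : ℕ → ℝ := fun n => if m ≤ n then r ^ n else 0 with hgdef
  have hbase0 : ∀ n : ℕ, 0 ≤ C₁ * t ^ 2 * Real.sqrt (Real.log (Real.exp 1 + (n:ℝ)) *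
      L ^ δ * Real.log L) / (n:ℝ) ^ 2 := fun n =>
    div_nonneg (mul_nonneg (mul_nonneg hC₁.le (sq_nonneg t)) (Real.sqrt_nonneg _))
      (sq_nonneg _)
  have hf0 : ∀ n, 0 ≤ f n := by
    intro n
    simp only [hfdef]
    split
    · exact pow_nonneg (hbase0 n) n
    · exact le_refl 0
  have hfg : ∀ n, f n ≤ g n := by
    intro n
    simp only [hfdef, hgdef]
    split
    · next h => exact pow_le_pow_left₀ (hbase0 n) (hbase n h) n
    · exact le_refl 0
  have hg0 : ∀ n, 0 ≤ g n := by
    intro n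
    simp only [hgdef]
    split
    · exact pow_nonneg hr0.le n
    · exact le_refl 0
  have hgle : ∀ n, g n ≤ r ^ n := by
    intro n
    simp only [hgdef]
    split
    · exact le_refl _
    · exact pow_nonneg hr0.le n
  have hgsummable : Summable g :=
    Summable.of_nonneg_of_le hg0 hgle (summable_geometric_of_lt_one hr0.le hr1)
  have hfsummable : Summable f := Summable.of_nonneg_of_le hf0 hfg hgsummable
  have htsum : ∑' n, f n ≤ ∑' n, g n := hfsummable.tsum_le_tsum hfg hgsummable
  have hgsum : ∑' n, g n = r ^ m * (1 - r)⁻¹ := by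
    have h0 : ∑ i ∈ Finset.range m, g i = 0 := by
      apply Finset.sum_eq_zero
      intro i hi
      simp only [hgdef]
      rw [if_neg (Nat.not_le.mpr (Finset.mem_range.mp hi))]
    have hadd := Summable.sum_add_tsum_nat_add m hgsummable
    have h1' : ∀ i : ℕ, g (i + m) = r ^ i * r ^ m := by
      intro i
      simp only [hgdef]
      rw [if_pos (Nat.le_add_left m i), pow_add]
    calc ∑' n, g n = ∑' i, g (i + m) := by rw [← hadd, h0, zero_add]
      _ = ∑' i, r ^ i * r ^ m := by simp only [h1']
      _ = (∑' i, r ^ i) * r ^ m := tsum_mul_right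
      _ = (1 - r)⁻¹ * r ^ m := by rw [tsum_geometric_of_lt_one hr0.le hr1]
      _ = r ^ m * (1 - r)⁻¹ := mul_comm _ _
  have hinv2 : (1 - r)⁻¹ ≤ 2 := by
    have hh : (1:ℝ)/2 ≤ 1 - r := by linarith
    calc (1 - r)⁻¹ ≤ ((1:ℝ)/2)⁻¹ := inv_anti₀ (by norm_num) hh
      _ = 2 := by norm_num
  have hmsqrt : t * Real.sqrt L ≤ (m:ℝ) := by
    have hsl : L ^ ((1:ℝ)/2) ≤ L ^ α := Real.rpow_le_rpow_of_exponent_le hL1 hα.le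
    calc t * Real.sqrt L = t * L ^ ((1:ℝ)/2) := by rw [Real.sqrt_eq_rpow]
      _ ≤ t * L ^ α := mul_le_mul_of_nonneg_left hsl ht0.le
      _ = M := hMdef.symm
      _ ≤ (m:ℝ) := hMm.le
  have hrm : r ^ m = Real.exp (-(3 * (m:ℝ))) := by
    rw [hrdef, ← Real.exp_nat_mul]
    congr 1
    ring
  have hexpnn : (0:ℝ) ≤ Real.exp (b*t) * (1+t) := by positivity
  calc Real.exp (b * t) * (1 + t) * (∑' n, f n)
      ≤ Real.exp (b * t) * (1 + t) * (r ^ m * (1 - r)⁻¹) := by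
        apply mul_le_mul_of_nonneg_left _ hexpnn
        rw [← hgsum]; exact htsum
    _ ≤ Real.exp (b * t) * (1 + t) * (r ^ m * 2) := by
        apply mul_le_mul_of_nonneg_left _ hexpnn
        exact mul_le_mul_of_nonneg_left hinv2 (pow_nonneg hr0.le m)
    _ = Real.exp (b*t) * Real.exp (Real.log (1+t)) * Real.exp (Real.log 2) *
          Real.exp (-(3*(m:ℝ))) := by
        rw [Real.exp_log (by linarith : (0:ℝ) < 1+t),
          Real.exp_log (by norm_num : (0:ℝ) < 2), hrm]
        ring
    _ = Real.exp (b*t + Real.log (1+t) + Real.log 2 + -(3*(m:ℝ))) := by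
        rw [← Real.exp_add, ← Real.exp_add, ← Real.exp_add]
    _ ≤ Real.exp (-(t * Real.sqrt L)) := by
        apply Real.exp_le_exp.mpr
        have := h5
        linarith [hmsqrt]

/-- Tail series estimate: for `α > 1/2`, `δ ∈ (1, 4α-1)`, `C₁ > 0` and `b > 0`, the
quantity `e^{bt}(1+t) Σ_{n≥m} (C₁ t² (log(e+n)(log t)^δ log log t)^{1/2}/n²)^n`
tends to `0` as `t → ∞`, uniformly over the integers `m > t (log t)^α`; in fact it is
bounded by `exp(-t (log t)^{1/2})` for all sufficiently large `t`. -/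
theorem statement12 (α δ C₁ b : ℝ) (hα : 1/2 < α) (hδl : 1 < δ) (hδu : δ < 4*α - 1)
    (hC₁ : 0 < C₁) (hb : 0 < b) :
    (∀ ε > (0:ℝ), ∃ t₀ : ℝ, ∀ t : ℝ, t₀ ≤ t → ∀ m : ℕ,
      t * Real.log t ^ α < (m : ℝ) →
      Real.exp (b * t) * (1 + t) *
        (∑' n : ℕ, if m ≤ n then
            (C₁ * t ^ 2 *
              Real.sqrt (Real.log (Real.exp 1 + (n:ℝ)) * Real.log t ^ δ *
                Real.log (Real.log t)) / (n:ℝ) ^ 2) ^ n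
          else 0) < ε) ∧
    (∃ t₀ : ℝ, ∀ t : ℝ, t₀ ≤ t → ∀ m : ℕ,
      t * Real.log t ^ α < (m : ℝ) →
      Real.exp (b * t) * (1 + t) *
        (∑' n : ℕ, if m ≤ n then
            (C₁ * t ^ 2 *
              Real.sqrt (Real.log (Real.exp 1 + (n:ℝ)) * Real.log t ^ δ *
                Real.log (Real.log t)) / (n:ℝ) ^ 2) ^ n
          else 0) ≤ Real.exp (-(t * Real.sqrt (Real.log t)))) := by
  have hev := key_event α δ C₁ b hα hδl hδu hC₁ hb
  constructor
  · intro ε hε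
    have h2 : ∀ᶠ t : ℝ in atTop, ∀ m : ℕ, t * Real.log t ^ α < (m : ℝ) →
        Real.exp (b * t) * (1 + t) *
          (∑' n : ℕ, if m ≤ n then
              (C₁ * t ^ 2 *
                Real.sqrt (Real.log (Real.exp 1 + (n:ℝ)) * Real.log t ^ δ *
                  Real.log (Real.log t)) / (n:ℝ) ^ 2) ^ n
            else 0) < ε := by
      filter_upwards [hev, eventually_ge_atTop (Real.exp 1),
        eventually_gt_atTop (-Real.log ε)] with t hA hB hC m hm
      refine lt_of_le_of_lt (hA m hm) ?_
      have ht0 : (0:ℝ) < t := lt_of_lt_of_le (Real.exp_pos 1) hB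
      have hL1 : 1 ≤ Real.log t := by
        calc (1:ℝ) = Real.log (Real.exp 1) := (Real.log_exp 1).symm
          _ ≤ Real.log t := Real.log_le_log (Real.exp_pos 1) hB
      have hs : 1 ≤ Real.sqrt (Real.log t) := by
        calc (1:ℝ) = Real.sqrt 1 := Real.sqrt_one.symm
          _ ≤ Real.sqrt (Real.log t) := Real.sqrt_le_sqrt hL1
      have ht1 : (1:ℝ) ≤ t := by nlinarith [Real.exp_one_gt_d9]
      have hts : t ≤ t * Real.sqrt (Real.log t) := by nlinarith
      calc Real.exp (-(t * Real.sqrt (Real.log t))) < Real.exp (Real.log ε) :=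
            Real.exp_lt_exp.mpr (by linarith)
        _ = ε := Real.exp_log hε
    exact eventually_atTop.mp h2
  · exact eventually_atTop.mp hev
end

section
/- Vanishing of the Jacobian beyond distance t log^α t: let α > 1/2 and δ ∈ (1, 4α−1). Assume Φ_t : X₀ → X₀ is a one-parameter group solving the infinite lattice dynamics such that Q(Φ_t(x)) ≤ C₀{Q(x) log(e+Q(x)) + t⁴} for all x ∈ X₀ and t, and assume the Jacobians Δ_j(t,x) = ∂Φ_t(x)_j/∂x₀ satisfy ‖Δ_j(t,x)‖ ≤ (1+t) Σ_{n=|j|}^∞ ( C₁ t² [sup_{0≤s≤t} Q(Φ_s(x))]^{1/2} log^{1/2}(e+n) / n² )^n for constants C₀, C₁. Let x ∈ X₀ be such that there exists n₀ ∈ ℕ with Q(Φ_k(x)) ≤ (log k)^δ for every integer k ≥ n₀. Then for every b > 0, lim_{t→∞} sup_{j∈ℤ^d : |j| > t (log t)^α} e^{bt} ‖Δ_j(t,x)‖ = 0. -/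
open MeasureTheory Real Filter
open scoped ENNReal

noncomputable section

/-- The force acting on the oscillator at site `i`. -/
noncomputable def force {d : ℕ} (U : Polynomial ℝ) (K : ℝ) (x : Conf d) (i : Site d) : ℝ :=
  -(Polynomial.derivative U).eval (x i).1
    - K * ∑ j ∈ (cube i 1).filter (fun j => ldist i j = 1), ((x i).1 - (x j).1)

/-- `x : ℝ → Conf d` is a global solution of the infinite lattice dynamics:
`q̇_i = p_i`, `ṗ_i = F_i(x(t))` for all sites and times. -/
def IsSolution {d : ℕ} (U : Polynomial ℝ) (K : ℝ) (x : ℝ → Conf d) : Prop :=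
  ∀ (i : Site d) (t : ℝ),
    HasDerivAt (fun s => (x s i).1) ((x t i).2) t ∧
    HasDerivAt (fun s => (x s i).2) (force U K (x t) i) t

/-- The norm of a 2×2 matrix: maximum of the absolute values of the entries. -/
noncomputable def matNorm (M : Matrix (Fin 2) (Fin 2) ℝ) : ℝ :=
  max (max |M 0 0| |M 0 1|) (max |M 1 0| |M 1 1|)

/-- The continuous linear map `ℝ² → ℝ²` associated with a 2×2 matrix. -/
noncomputable def matCLM (M : Matrix (Fin 2) (Fin 2) ℝ) : ℝ × ℝ →L[ℝ] ℝ × ℝ :=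
  (M 0 0 • ContinuousLinearMap.fst ℝ ℝ ℝ + M 0 1 • ContinuousLinearMap.snd ℝ ℝ ℝ).prod
    (M 1 0 • ContinuousLinearMap.fst ℝ ℝ ℝ + M 1 1 • ContinuousLinearMap.snd ℝ ℝ ℝ)

private lemma aux_log_le_rpow_div {x θ : ℝ} (hx : 1 ≤ x) (hθ : 0 < θ) :
    Real.log x ≤ x ^ θ / θ := by
  have hx0 : (0:ℝ) < x := by linarith
  have h1 : Real.log (x ^ θ) = θ * Real.log x := Real.log_rpow hx0 θ
  have h2 : Real.log (x ^ θ) ≤ x ^ θ - 1 := Real.log_le_sub_one_of_pos (Real.rpow_pos_of_pos hx0 θ)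
  rw [le_div_iff₀ hθ]; rw [h1] at h2; linarith

private lemma aux_sqrt_rpow {a : ℝ} (ha : 0 ≤ a) (y : ℝ) :
    Real.sqrt (a ^ y) = a ^ (y/2) := by
  rw [Real.sqrt_eq_rpow, ← Real.rpow_mul ha]; congr 1; ring

private lemma aux_mono {T n : ℝ} (hT : 1 ≤ T) (hTn : T ≤ n) :
    Real.sqrt (Real.log (Real.exp 1 + n)) / n ^ 2 ≤
      Real.sqrt (Real.log (Real.exp 1 + T)) / T ^ 2 := by
  have he1 : (1:ℝ) ≤ Real.exp 1 := by linarith [Real.add_one_le_exp (1:ℝ)]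
  have hT0 : (0:ℝ) < T := by linarith
  have hn0 : (0:ℝ) < n := by linarith
  have hTe : (0:ℝ) < Real.exp 1 + T := by linarith
  have hne : (0:ℝ) < Real.exp 1 + n := by linarith
  have hlogT1 : 1 ≤ Real.log (Real.exp 1 + T) := by
    rw [Real.le_log_iff_exp_le hTe]; linarith
  have hlogn0 : 0 ≤ Real.log (Real.exp 1 + n) := Real.log_nonneg (by linarith)
  have hkey : Real.log (Real.exp 1 + n) * T ≤ Real.log (Real.exp 1 + T) * n := by
    have h1 : Real.log ((Real.exp 1 + n)/(Real.exp 1 + T)) ≤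
        (Real.exp 1 + n)/(Real.exp 1 + T) - 1 :=
      Real.log_le_sub_one_of_pos (by positivity)
    rw [Real.log_div (ne_of_gt hne) (ne_of_gt hTe)] at h1
    have h2 : (Real.exp 1 + n)/(Real.exp 1 + T) - 1 = (n - T)/(Real.exp 1 + T) := by
      field_simp; ring
    rw [h2] at h1
    have h3 : T * ((n - T)/(Real.exp 1 + T)) ≤ n - T := by
      rw [mul_div_assoc', div_le_iff₀ hTe]; nlinarith
    have h4 : n - T ≤ (n - T) * Real.log (Real.exp 1 + T) := by nlinarith
    nlinarith [mul_le_mul_of_nonneg_left h1 hT0.le]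
  have hkey4 : Real.log (Real.exp 1 + n) * T^4 ≤ Real.log (Real.exp 1 + T) * n^4 := by
    have hT3 : T^3 ≤ n^3 := pow_le_pow_left₀ hT0.le hTn 3
    calc Real.log (Real.exp 1 + n) * T^4 = (Real.log (Real.exp 1 + n) * T) * T^3 := by ring
      _ ≤ (Real.log (Real.exp 1 + T) * n) * T^3 :=
          mul_le_mul_of_nonneg_right hkey (by positivity)
      _ ≤ (Real.log (Real.exp 1 + T) * n) * n^3 :=
          mul_le_mul_of_nonneg_left hT3 (mul_nonneg (by linarith) hn0.le)
      _ = Real.log (Real.exp 1 + T) * n^4 := by ring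
  have hdiv : Real.log (Real.exp 1 + n) / n^4 ≤ Real.log (Real.exp 1 + T) / T^4 := by
    rw [div_le_div_iff₀ (by positivity) (by positivity)]; linarith
  have hs := Real.sqrt_le_sqrt hdiv
  rwa [Real.sqrt_div hlogn0, Real.sqrt_div (by linarith : (0:ℝ) ≤ Real.log (Real.exp 1 + T)),
    show n^4 = (n^2)^2 by ring, show T^4 = (T^2)^2 by ring,
    Real.sqrt_sq (by positivity), Real.sqrt_sq (by positivity)] at hs

set_option maxHeartbeats 1000000 in
/-- Vanishing of the Jacobian beyond distance `t (log t)^α`: under the a priori bound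
on `Q` along the flow, the Jacobian series bound, and the slow-growth property
`Q(Φ_k(x)) ≤ (log k)^δ` for large integers `k`, one has
`e^{bt} ‖Δ_j(t,x)‖ → 0` uniformly over `|j| > t (log t)^α`, for every `b > 0`. -/
theorem statement17 {d : ℕ} (hd : 0 < d) (U : Polynomial ℝ) (hUdeg : U.degree = 4)
    (hUpos : ∀ y : ℝ, 0 ≤ U.eval y) (hUlead : 0 < U.leadingCoeff)
    (K : ℝ) (hK : 0 < K)
    (α δ : ℝ) (hα : 1/2 < α) (hδl : 1 < δ) (hδu : δ < 4*α - 1)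
    (Φ : ℝ → Conf d → Conf d)
    (hmap : ∀ t : ℝ, ∀ y ∈ X0 d U K, Φ t y ∈ X0 d U K)
    (hΦ0 : ∀ y ∈ X0 d U K, Φ 0 y = y)
    (hgroup : ∀ s t : ℝ, ∀ y ∈ X0 d U K, Φ (s + t) y = Φ s (Φ t y))
    (hsol : ∀ y ∈ X0 d U K, IsSolution U K fun t => Φ t y)
    (C₀ : ℝ) (hC₀ : 0 < C₀)
    (hQbound : ∀ y ∈ X0 d U K, ∀ t : ℝ,
      Qen U K (Φ t y) ≤ ENNReal.ofReal
        (C₀ * ((Qen U K y).toReal *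
          Real.log (Real.exp 1 + (Qen U K y).toReal) + t ^ 4)))
    (x : Conf d) (hx : x ∈ X0 d U K)
    (Δ : Site d → ℝ → Matrix (Fin 2) (Fin 2) ℝ)
    (C₁ : ℝ) (hC₁ : 0 < C₁)
    (hΔ : ∀ (j : Site d) (t : ℝ), 0 < t → ∀ M : ℝ, 0 ≤ M →
      (∀ s ∈ Set.Icc (0:ℝ) t, (Qen U K (Φ s x)).toReal ≤ M) →
      matNorm (Δ j t) ≤ (1 + t) *
        ∑' n : ℕ, if (lnorm j : ℝ) ≤ (n : ℝ) then
            (C₁ * t ^ 2 * Real.sqrt M *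
              Real.sqrt (Real.log (Real.exp 1 + (n:ℝ))) / (n:ℝ) ^ 2) ^ n
          else 0)
    (n₀ : ℕ)
    (hgood : ∀ k : ℕ, n₀ ≤ k → Qen U K (Φ k x) ≤ ENNReal.ofReal (Real.log k ^ δ)) :
    ∀ b > (0:ℝ), ∀ ε > (0:ℝ), ∃ t₀ : ℝ, ∀ t : ℝ, t₀ ≤ t → ∀ j : Site d,
      t * Real.log t ^ α < (lnorm j : ℝ) →
        Real.exp (b * t) * matNorm (Δ j t) < ε := by
  intro b hb ε hε
  -- basic positivity facts
  have he1 : (1:ℝ) ≤ Real.exp 1 := by linarith [Real.add_one_le_exp (1:ℝ)]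
  have hα0 : (0:ℝ) < α := by linarith
  have hδ0 : (0:ℝ) < δ := by linarith
  -- constants
  set Q₀ : ℝ := (Qen U K x).toReal with hQ₀def
  have hQ₀0 : 0 ≤ Q₀ := ENNReal.toReal_nonneg
  have hlogeQ₀ : 0 ≤ Real.log (Real.exp 1 + Q₀) := Real.log_nonneg (by linarith)
  set A₀ : ℝ := C₀ * (Q₀ * Real.log (Real.exp 1 + Q₀) + ((n₀:ℝ)+1)^4) with hA₀def
  have hA₀0 : 0 ≤ A₀ := by
    apply mul_nonneg hC₀.le
    have h1 : (0:ℝ) ≤ ((n₀:ℝ)+1)^4 := by positivity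
    have h2 := mul_nonneg hQ₀0 hlogeQ₀
    linarith only [h1, h2]
  set η : ℝ := (4*α - 1 - δ)/2 with hηdef
  have hη0 : 0 < η := by rw [hηdef]; linarith
  set θ : ℝ := η/(2*δ) with hθdef
  have hθ0 : 0 < θ := by rw [hθdef]; positivity
  set Cm : ℝ := A₀ + C₀ * ((1 + Real.exp 1)^θ / θ) + C₀ with hCmdef
  have hCm0 : 0 < Cm := by
    have h1 : (0:ℝ) < (1 + Real.exp 1)^θ := Real.rpow_pos_of_pos (by linarith) θ
    have h2 : (0:ℝ) ≤ C₀ * ((1 + Real.exp 1)^θ / θ) := by positivity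
    rw [hCmdef]; linarith
  -- the a priori bound on Q along the flow
  have hM : ∀ t : ℝ, (n₀:ℝ) ≤ t → 1 ≤ t → ∀ s ∈ Set.Icc (0:ℝ) t,
      (Qen U K (Φ s x)).toReal ≤
        A₀ + C₀ * (Real.log t ^ δ * Real.log (Real.exp 1 + Real.log t ^ δ) + 1) := by
    intro t htn₀ ht1 s hs
    obtain ⟨hs0, hst⟩ := hs
    have hlt0 : 0 ≤ Real.log t := Real.log_nonneg ht1
    have hLt0 : 0 ≤ Real.log t ^ δ := Real.rpow_nonneg hlt0 δ
    have hlogeLt : 0 ≤ Real.log (Real.exp 1 + Real.log t ^ δ) := Real.log_nonneg (by linarith)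
    have hMt2 : 0 ≤ C₀ * (Real.log t ^ δ * Real.log (Real.exp 1 + Real.log t ^ δ) + 1) := by
      apply mul_nonneg hC₀.le
      have := mul_nonneg hLt0 hlogeLt
      linarith only [this]
    by_cases hcase : (n₀:ℝ) ≤ s
    · -- s ≥ n₀ : use the good integer times
      set k : ℕ := ⌊s⌋₊ with hkdef
      have hk_le : (k:ℝ) ≤ s := Nat.floor_le hs0
      have hk_lt : s < (k:ℝ) + 1 := Nat.lt_floor_add_one s
      have hn₀k : n₀ ≤ k := Nat.le_floor hcase
      have hy : Φ (k:ℝ) x ∈ X0 d U K := hmap (k:ℝ) x hx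
      have hlogk0 : 0 ≤ Real.log (k:ℝ) := by
        rcases Nat.eq_zero_or_pos k with h0 | h1
        · simp [h0]
        · exact Real.log_nonneg (by exact_mod_cast h1)
      have hLk0 : 0 ≤ Real.log (k:ℝ) ^ δ := Real.rpow_nonneg hlogk0 δ
      have hQy : (Qen U K (Φ (k:ℝ) x)).toReal ≤ Real.log (k:ℝ) ^ δ :=
        ENNReal.toReal_le_of_le_ofReal hLk0 (hgood k hn₀k)
      have hlogk_le : Real.log (k:ℝ) ≤ Real.log t := by
        rcases Nat.eq_zero_or_pos k with h0 | h1
        · simpa [h0] using hlt0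
        · exact Real.log_le_log (by exact_mod_cast h1) (le_trans hk_le hst)
      have hLkLt : Real.log (k:ℝ) ^ δ ≤ Real.log t ^ δ :=
        Real.rpow_le_rpow hlogk0 hlogk_le hδ0.le
      have heq : Φ s x = Φ (s - (k:ℝ)) (Φ (k:ℝ) x) := by
        rw [← hgroup (s - (k:ℝ)) (k:ℝ) x hx]; congr 1; ring
      set Qy : ℝ := (Qen U K (Φ (k:ℝ) x)).toReal with hQydef
      have hQy0 : 0 ≤ Qy := ENNReal.toReal_nonneg
      have hlogQy0 : 0 ≤ Real.log (Real.exp 1 + Qy) := Real.log_nonneg (by linarith)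
      have hb1 : (Qen U K (Φ s x)).toReal ≤
          C₀ * (Qy * Real.log (Real.exp 1 + Qy) + (s - (k:ℝ))^4) := by
        rw [heq]
        refine ENNReal.toReal_le_of_le_ofReal ?_ (hQbound _ hy (s - (k:ℝ)))
        have h1 : (0:ℝ) ≤ (s - (k:ℝ))^4 := by positivity
        apply mul_nonneg hC₀.le
        have h2 := mul_nonneg hQy0 hlogQy0
        linarith only [h1, h2]
      have hmono : Qy * Real.log (Real.exp 1 + Qy) ≤
          Real.log t ^ δ * Real.log (Real.exp 1 + Real.log t ^ δ) := by
        have hQyLt : Qy ≤ Real.log t ^ δ := le_trans hQy hLkLt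
        have hlog2 : Real.log (Real.exp 1 + Qy) ≤ Real.log (Real.exp 1 + Real.log t ^ δ) :=
          Real.log_le_log (by linarith) (by linarith)
        exact mul_le_mul hQyLt hlog2 hlogQy0 hLt0
      have hsk4 : (s - (k:ℝ))^4 ≤ 1 := pow_le_one₀ (by linarith) (by linarith)
      calc (Qen U K (Φ s x)).toReal
          ≤ C₀ * (Qy * Real.log (Real.exp 1 + Qy) + (s - (k:ℝ))^4) := hb1
        _ ≤ C₀ * (Real.log t ^ δ * Real.log (Real.exp 1 + Real.log t ^ δ) + 1) := by
            apply mul_le_mul_of_nonneg_left _ hC₀.le; linarith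
        _ ≤ A₀ + C₀ * (Real.log t ^ δ * Real.log (Real.exp 1 + Real.log t ^ δ) + 1) :=
            le_add_of_nonneg_left hA₀0
    · -- s < n₀ : crude bound
      push_neg at hcase
      have hb1 : (Qen U K (Φ s x)).toReal ≤
          C₀ * (Q₀ * Real.log (Real.exp 1 + Q₀) + s^4) := by
        refine ENNReal.toReal_le_of_le_ofReal ?_ (hQbound x hx s)
        have h1 : (0:ℝ) ≤ s^4 := by positivity
        apply mul_nonneg hC₀.le
        have h2 := mul_nonneg hQ₀0 hlogeQ₀
        linarith only [h1, h2]
      have hs4 : s^4 ≤ ((n₀:ℝ)+1)^4 := pow_le_pow_left₀ hs0 (by linarith) 4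
      calc (Qen U K (Φ s x)).toReal ≤ C₀ * (Q₀ * Real.log (Real.exp 1 + Q₀) + s^4) := hb1
        _ ≤ A₀ := by rw [hA₀def]; apply mul_le_mul_of_nonneg_left _ hC₀.le; linarith
        _ ≤ A₀ + C₀ * (Real.log t ^ δ * Real.log (Real.exp 1 + Real.log t ^ δ) + 1) :=
            le_add_of_nonneg_right hMt2
  -- bound M(t) by Cm (log t)^(δ+η)
  have hMle : ∀ t : ℝ, 1 ≤ Real.log t →
      A₀ + C₀ * (Real.log t ^ δ * Real.log (Real.exp 1 + Real.log t ^ δ) + 1) ≤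
        Cm * Real.log t ^ (δ+η) := by
    intro t hu
    have hu0 : (0:ℝ) < Real.log t := by linarith
    have huδ1 : 1 ≤ Real.log t ^ δ := by
      calc (1:ℝ) = Real.log t ^ (0:ℝ) := (Real.rpow_zero _).symm
        _ ≤ Real.log t ^ δ := Real.rpow_le_rpow_of_exponent_le hu hδ0.le
    have hlog1 : Real.log (Real.exp 1 + Real.log t ^ δ) ≤
        (Real.exp 1 + Real.log t ^ δ)^θ / θ :=
      aux_log_le_rpow_div (by linarith) hθ0
    have hpow : (Real.exp 1 + Real.log t ^ δ)^θ ≤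
        (1 + Real.exp 1)^θ * Real.log t ^ (δ*θ) := by
      calc (Real.exp 1 + Real.log t ^ δ)^θ
          ≤ ((1 + Real.exp 1) * Real.log t ^ δ)^θ := by
            apply Real.rpow_le_rpow (by linarith) _ hθ0.le
            have h1 := mul_le_mul_of_nonneg_left huδ1 (Real.exp_pos 1).le
            rw [mul_one] at h1
            linarith only [h1, huδ1]
        _ = (1 + Real.exp 1)^θ * (Real.log t ^ δ)^θ :=
            Real.mul_rpow (by linarith) (by positivity)
        _ = (1 + Real.exp 1)^θ * Real.log t ^ (δ*θ) := by
            rw [← Real.rpow_mul hu0.le]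
    have hδθ : δ*θ = η/2 := by rw [hθdef]; field_simp
    have huδθ : Real.log t ^ (δ*θ) ≤ Real.log t ^ η := by
      rw [hδθ]; exact Real.rpow_le_rpow_of_exponent_le hu (by linarith)
    have hEθ : (0:ℝ) < (1 + Real.exp 1)^θ := Real.rpow_pos_of_pos (by linarith) θ
    have hmain : Real.log t ^ δ * Real.log (Real.exp 1 + Real.log t ^ δ) ≤
        ((1 + Real.exp 1)^θ/θ) * Real.log t ^ (δ+η) := by
      calc Real.log t ^ δ * Real.log (Real.exp 1 + Real.log t ^ δ)
          ≤ Real.log t ^ δ * ((1 + Real.exp 1)^θ * Real.log t ^ η / θ) := by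
            apply mul_le_mul_of_nonneg_left _ (Real.rpow_nonneg hu0.le δ)
            calc Real.log (Real.exp 1 + Real.log t ^ δ)
                ≤ (Real.exp 1 + Real.log t ^ δ)^θ / θ := hlog1
              _ ≤ (1 + Real.exp 1)^θ * Real.log t ^ (δ*θ) / θ := by gcongr
              _ ≤ (1 + Real.exp 1)^θ * Real.log t ^ η / θ := by
                  have := mul_le_mul_of_nonneg_left huδθ hEθ.le
                  gcongr
        _ = ((1 + Real.exp 1)^θ/θ) * (Real.log t ^ δ * Real.log t ^ η) := by ring
        _ = ((1 + Real.exp 1)^θ/θ) * Real.log t ^ (δ+η) := by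
            rw [← Real.rpow_add hu0]
    have hone : (1:ℝ) ≤ Real.log t ^ (δ+η) :=
      le_trans huδ1 (Real.rpow_le_rpow_of_exponent_le hu (by linarith))
    have h1 : A₀ ≤ A₀ * Real.log t ^ (δ+η) := le_mul_of_one_le_right hA₀0 hone
    have h2 : C₀ ≤ C₀ * Real.log t ^ (δ+η) := le_mul_of_one_le_right hC₀.le hone
    have h3 : C₀ * (Real.log t ^ δ * Real.log (Real.exp 1 + Real.log t ^ δ)) ≤
        C₀ * (((1 + Real.exp 1)^θ/θ) * Real.log t ^ (δ+η)) :=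
      mul_le_mul_of_nonneg_left hmain hC₀.le
    calc A₀ + C₀ * (Real.log t ^ δ * Real.log (Real.exp 1 + Real.log t ^ δ) + 1)
        = A₀ + C₀ * (Real.log t ^ δ * Real.log (Real.exp 1 + Real.log t ^ δ)) + C₀ := by ring
      _ ≤ A₀ * Real.log t ^ (δ+η) + C₀ * (((1 + Real.exp 1)^θ/θ) * Real.log t ^ (δ+η))
            + C₀ * Real.log t ^ (δ+η) := by linarith
      _ = Cm * Real.log t ^ (δ+η) := by rw [hCmdef]; ring
  -- remaining constants
  set C₄ : ℝ := C₁ * Real.sqrt Cm * Real.sqrt (4+α) with hC₄def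
  have hC₄0 : 0 < C₄ := by
    rw [hC₄def]
    have := Real.sqrt_pos.mpr hCm0
    have : (0:ℝ) < Real.sqrt (4+α) := Real.sqrt_pos.mpr (by linarith)
    positivity
  set c₂ : ℝ := Real.log 2 / 2 with hc₂def
  have hc₂0 : 0 < c₂ := by rw [hc₂def]; have := Real.log_pos (by norm_num : (1:ℝ) < 2); linarith
  set s₂ : ℝ := (Real.sqrt 2)⁻¹ with hs₂def
  have hsqrt2 : (1:ℝ) < Real.sqrt 2 := by
    rw [show (1:ℝ) = Real.sqrt 1 by simp]
    exact Real.sqrt_lt_sqrt (by norm_num) (by norm_num)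
  have hs₂0 : 0 < s₂ := by rw [hs₂def]; positivity
  have hs₂1 : s₂ < 1 := by rw [hs₂def]; exact inv_lt_one_of_one_lt₀ hsqrt2
  have hs₂sq : s₂^2 = 1/2 := by
    rw [hs₂def, inv_pow, Real.sq_sqrt (by norm_num : (0:ℝ) ≤ 2)]; norm_num
  -- choice of t₀
  refine ⟨max (max 3 ((n₀:ℝ)+1)) (max (Real.exp ((max 1 (2*C₄))^((2:ℝ)/η)))
    (max (Real.exp (((b+2)/c₂)^(α⁻¹))) (4/ε + 1))), ?_⟩
  intro t ht j hj
  have ht3 : (3:ℝ) ≤ t := le_trans (le_trans (le_max_left _ _) (le_max_left _ _)) ht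
  have ht1 : (1:ℝ) ≤ t := by linarith
  have ht0 : (0:ℝ) < t := by linarith
  have htn₀ : (n₀:ℝ) ≤ t := by
    have := le_trans (le_trans (le_max_right 3 ((n₀:ℝ)+1)) (le_max_left _ _)) ht
    linarith
  have hu1 : (1:ℝ) ≤ Real.log t := by
    have h3 : (1:ℝ) ≤ Real.log 3 := by
      rw [Real.le_log_iff_exp_le (by norm_num)]
      have := Real.exp_one_lt_d9; linarith
    calc (1:ℝ) ≤ Real.log 3 := h3
      _ ≤ Real.log t := Real.log_le_log (by norm_num) ht3
  have hu0 : (0:ℝ) < Real.log t := by linarith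
  have hB₂ : (max 1 (2*C₄))^((2:ℝ)/η) ≤ Real.log t := by
    have h := le_trans (le_trans (le_max_left _ _) (le_max_right _ _)) ht
    have := Real.log_le_log (Real.exp_pos _) h
    rwa [Real.log_exp] at this
  have hbα : (b+2)/c₂ ≤ Real.log t ^ α := by
    have h := le_trans (le_trans (le_max_left _ _) (le_trans (le_max_right _ _)
      (le_max_right _ _))) ht
    have hlb : ((b+2)/c₂)^(α⁻¹) ≤ Real.log t := by
      have := Real.log_le_log (Real.exp_pos _) h
      rwa [Real.log_exp] at this
    have h0 : (0:ℝ) ≤ (b+2)/c₂ := by positivity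
    calc (b+2)/c₂ = (((b+2)/c₂)^(α⁻¹))^α := by
          rw [← Real.rpow_mul h0, inv_mul_cancel₀ (ne_of_gt hα0), Real.rpow_one]
      _ ≤ Real.log t ^ α := Real.rpow_le_rpow (Real.rpow_nonneg h0 _) hlb hα0.le
  have htε : 4/ε + 1 ≤ t :=
    le_trans (le_trans (le_max_right _ _) (le_trans (le_max_right _ _) (le_max_right _ _))) ht
  -- abbreviations for this t
  have hlt0 : 0 ≤ Real.log t := hu0.le
  have hLt0 : 0 ≤ Real.log t ^ δ := Real.rpow_nonneg hlt0 δ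
  have hlogeLt : 0 ≤ Real.log (Real.exp 1 + Real.log t ^ δ) := Real.log_nonneg (by linarith)
  set Mv : ℝ := A₀ + C₀ * (Real.log t ^ δ * Real.log (Real.exp 1 + Real.log t ^ δ) + 1)
    with hMvdef
  have hMv0 : 0 ≤ Mv := by
    have h1 : 0 ≤ C₀ * (Real.log t ^ δ * Real.log (Real.exp 1 + Real.log t ^ δ) + 1) := by
      apply mul_nonneg hC₀.le
      have := mul_nonneg hLt0 hlogeLt
      linarith only [this]
    rw [hMvdef]; linarith only [h1, hA₀0]
  have huα1 : (1:ℝ) ≤ Real.log t ^ α := by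
    calc (1:ℝ) = Real.log t ^ (0:ℝ) := (Real.rpow_zero _).symm
      _ ≤ Real.log t ^ α := Real.rpow_le_rpow_of_exponent_le hu1 hα0.le
  have hT1 : (1:ℝ) ≤ t * Real.log t ^ α := by
    have := mul_le_mul ht1 huα1 (by norm_num) (by linarith : (0:ℝ) ≤ t)
    linarith only [this]
  have hT0 : (0:ℝ) < t * Real.log t ^ α := by linarith
  -- the uniform bound rho ≤ 1/2 on the ratio
  have hsqrtM : Real.sqrt Mv ≤ Real.sqrt Cm * Real.log t ^ ((δ+η)/2) := by
    calc Real.sqrt Mv ≤ Real.sqrt (Cm * Real.log t ^ (δ+η)) :=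
          Real.sqrt_le_sqrt (hMle t hu1)
      _ = Real.sqrt Cm * Real.sqrt (Real.log t ^ (δ+η)) := Real.sqrt_mul hCm0.le _
      _ = Real.sqrt Cm * Real.log t ^ ((δ+η)/2) := by rw [aux_sqrt_rpow hu0.le]
  have hlogT : Real.log (Real.exp 1 + t * Real.log t ^ α) ≤ (4+α) * Real.log t := by
    have hTpos : (0:ℝ) < t * Real.log t ^ α := hT0
    have h1 : Real.exp 1 + t * Real.log t ^ α ≤
        (Real.exp 1 + 1) * (t * Real.log t ^ α) := by
      have h0 := mul_nonneg (Real.exp_pos 1).le (sub_nonneg.mpr hT1)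
      have : (Real.exp 1 + 1) * (t * Real.log t ^ α) =
          Real.exp 1 * (t * Real.log t ^ α - 1) + Real.exp 1 + t * Real.log t ^ α := by ring
      linarith only [h0, this]
    have h2 : Real.log (Real.exp 1 + t * Real.log t ^ α) ≤
        Real.log ((Real.exp 1 + 1) * (t * Real.log t ^ α)) :=
      Real.log_le_log (by positivity) h1
    rw [Real.log_mul (by positivity) (by positivity),
      Real.log_mul (ne_of_gt ht0) (by positivity), Real.log_rpow hu0] at h2
    have h3 : Real.log (Real.exp 1 + 1) ≤ Real.exp 1 := by
      have := Real.log_le_sub_one_of_pos (show (0:ℝ) < Real.exp 1 + 1 by positivity)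
      linarith
    have h4 : Real.log (Real.log t) ≤ Real.log t := by
      have := Real.log_le_sub_one_of_pos hu0; linarith
    have he3 : Real.exp 1 ≤ 3 := by have := Real.exp_one_lt_d9; linarith
    have h5 : α * Real.log (Real.log t) ≤ α * Real.log t :=
      mul_le_mul_of_nonneg_left h4 hα0.le
    linarith only [h2, h3, h5, he3, hu1]
  have hsqrtlogT : Real.sqrt (Real.log (Real.exp 1 + t * Real.log t ^ α)) ≤
      Real.sqrt (4+α) * Real.log t ^ ((1:ℝ)/2) := by
    calc Real.sqrt (Real.log (Real.exp 1 + t * Real.log t ^ α))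
        ≤ Real.sqrt ((4+α) * Real.log t) := Real.sqrt_le_sqrt hlogT
      _ = Real.sqrt (4+α) * Real.sqrt (Real.log t) := Real.sqrt_mul (by linarith) _
      _ = Real.sqrt (4+α) * Real.log t ^ ((1:ℝ)/2) := by
          rw [Real.sqrt_eq_rpow (Real.log t)]
  have hT2eq : (t * Real.log t ^ α)^2 = t^2 * Real.log t ^ (α*2) := by
    rw [mul_pow, ← Real.rpow_natCast (Real.log t ^ α) 2, ← Real.rpow_mul hu0.le]
    norm_num
  have hρhalf : C₁ * t^2 * Real.sqrt Mv *
      Real.sqrt (Real.log (Real.exp 1 + t * Real.log t ^ α)) / (t * Real.log t ^ α)^2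
      ≤ 1/2 := by
    have hdenpos : (0:ℝ) < t^2 * Real.log t ^ (α*2) := by
      have := Real.rpow_pos_of_pos hu0 (α*2); positivity
    have hρ1 : C₁ * t^2 * Real.sqrt Mv *
        Real.sqrt (Real.log (Real.exp 1 + t * Real.log t ^ α)) / (t * Real.log t ^ α)^2
        ≤ C₄ * Real.log t ^ (-(η/2)) := by
      rw [hT2eq, div_le_iff₀ hdenpos]
      have hnum : C₁ * t^2 * Real.sqrt Mv *
          Real.sqrt (Real.log (Real.exp 1 + t * Real.log t ^ α)) ≤
          C₁ * t^2 * (Real.sqrt Cm * Real.log t ^ ((δ+η)/2)) *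
            (Real.sqrt (4+α) * Real.log t ^ ((1:ℝ)/2)) := by
        apply mul_le_mul (mul_le_mul_of_nonneg_left hsqrtM (by positivity)) hsqrtlogT
          (Real.sqrt_nonneg _)
        have h1 : 0 ≤ Real.log t ^ ((δ+η)/2) := Real.rpow_nonneg hu0.le _
        positivity
      have hre : C₁ * t^2 * (Real.sqrt Cm * Real.log t ^ ((δ+η)/2)) *
          (Real.sqrt (4+α) * Real.log t ^ ((1:ℝ)/2)) =
          C₄ * Real.log t ^ (-(η/2)) * (t^2 * Real.log t ^ (α*2)) := by
        have hupow : Real.log t ^ ((δ+η)/2) * Real.log t ^ ((1:ℝ)/2) =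
            Real.log t ^ (-(η/2)) * Real.log t ^ (α*2) := by
          rw [← Real.rpow_add hu0, ← Real.rpow_add hu0]
          congr 1
          rw [hηdef]; ring
        calc C₁ * t^2 * (Real.sqrt Cm * Real.log t ^ ((δ+η)/2)) *
            (Real.sqrt (4+α) * Real.log t ^ ((1:ℝ)/2))
            = (C₁ * Real.sqrt Cm * Real.sqrt (4+α)) * t^2 *
              (Real.log t ^ ((δ+η)/2) * Real.log t ^ ((1:ℝ)/2)) := by ring
          _ = (C₁ * Real.sqrt Cm * Real.sqrt (4+α)) * t^2 *
              (Real.log t ^ (-(η/2)) * Real.log t ^ (α*2)) := by rw [hupow]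
          _ = C₄ * Real.log t ^ (-(η/2)) * (t^2 * Real.log t ^ (α*2)) := by
              rw [hC₄def]; ring
      linarith [hre ▸ hnum]
    have hρ2 : C₄ * Real.log t ^ (-(η/2)) ≤ 1/2 := by
      have hup : (0:ℝ) < Real.log t ^ (η/2) := Real.rpow_pos_of_pos hu0 _
      have humax : max 1 (2*C₄) ≤ Real.log t ^ (η/2) := by
        have h0 : (0:ℝ) < max 1 (2*C₄) := lt_of_lt_of_le one_pos (le_max_left _ _)
        calc max 1 (2*C₄) = ((max 1 (2*C₄))^((2:ℝ)/η))^(η/2) := by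
              rw [← Real.rpow_mul h0.le,
                show (2:ℝ)/η*(η/2) = 1 by field_simp, Real.rpow_one]
          _ ≤ Real.log t ^ (η/2) :=
              Real.rpow_le_rpow (Real.rpow_nonneg h0.le _) hB₂ (by positivity)
      rw [Real.rpow_neg hu0.le, ← div_eq_mul_inv, div_le_iff₀ hup]
      have := le_trans (le_max_right 1 (2*C₄)) humax
      linarith
    linarith
  -- pointwise bound on the series terms
  have hterm : ∀ n : ℕ,
      (if (lnorm j : ℝ) ≤ (n : ℝ) then
        (C₁ * t ^ 2 * Real.sqrt Mv *
          Real.sqrt (Real.log (Real.exp 1 + (n:ℝ))) / (n:ℝ) ^ 2) ^ n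
      else 0) ≤ s₂^(t * Real.log t ^ α) * s₂^n := by
    intro n
    have hgn0 : (0:ℝ) ≤ s₂^(t * Real.log t ^ α) * s₂^n := by
      apply mul_nonneg (Real.rpow_nonneg hs₂0.le _) (pow_nonneg hs₂0.le n)
    by_cases hn : (lnorm j : ℝ) ≤ (n : ℝ)
    · rw [if_pos hn]
      have hTn : t * Real.log t ^ α ≤ (n:ℝ) := le_trans hj.le hn
      have hmono := aux_mono hT1 hTn
      have hbase0 : 0 ≤ C₁ * t^2 * Real.sqrt Mv *
          Real.sqrt (Real.log (Real.exp 1 + (n:ℝ))) / (n:ℝ)^2 := by positivity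
      have hbase : C₁ * t^2 * Real.sqrt Mv *
          Real.sqrt (Real.log (Real.exp 1 + (n:ℝ))) / (n:ℝ)^2 ≤ 1/2 := by
        calc C₁ * t^2 * Real.sqrt Mv *
              Real.sqrt (Real.log (Real.exp 1 + (n:ℝ))) / (n:ℝ)^2
            = (C₁ * t^2 * Real.sqrt Mv) *
              (Real.sqrt (Real.log (Real.exp 1 + (n:ℝ))) / (n:ℝ)^2) := by ring
          _ ≤ (C₁ * t^2 * Real.sqrt Mv) *
              (Real.sqrt (Real.log (Real.exp 1 + t * Real.log t ^ α)) /
                (t * Real.log t ^ α)^2) := by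
              apply mul_le_mul_of_nonneg_left hmono (by positivity)
          _ = C₁ * t^2 * Real.sqrt Mv *
              Real.sqrt (Real.log (Real.exp 1 + t * Real.log t ^ α)) /
                (t * Real.log t ^ α)^2 := by ring
          _ ≤ 1/2 := hρhalf
      calc (C₁ * t^2 * Real.sqrt Mv *
            Real.sqrt (Real.log (Real.exp 1 + (n:ℝ))) / (n:ℝ)^2) ^ n
          ≤ (1/2:ℝ)^n := pow_le_pow_left₀ hbase0 hbase n
        _ = (s₂^2)^n := by rw [hs₂sq]
        _ = s₂^n * s₂^n := by rw [← pow_mul, two_mul, pow_add]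
        _ ≤ s₂^(t * Real.log t ^ α) * s₂^n := by
            apply mul_le_mul_of_nonneg_right _ (pow_nonneg hs₂0.le n)
            rw [← Real.rpow_natCast s₂ n]
            exact Real.rpow_le_rpow_of_exponent_ge hs₂0 hs₂1.le hTn
    · rw [if_neg hn]; exact hgn0
  -- summing up
  have hgsum : Summable (fun n : ℕ => s₂^(t * Real.log t ^ α) * s₂^n) :=
    (summable_geometric_of_lt_one hs₂0.le hs₂1).mul_left _
  have hfnonneg : ∀ n : ℕ, (0:ℝ) ≤
      (if (lnorm j : ℝ) ≤ (n : ℝ) then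
        (C₁ * t ^ 2 * Real.sqrt Mv *
          Real.sqrt (Real.log (Real.exp 1 + (n:ℝ))) / (n:ℝ) ^ 2) ^ n
      else 0) := by
    intro n
    by_cases hn : (lnorm j : ℝ) ≤ (n : ℝ)
    · rw [if_pos hn]; positivity
    · rw [if_neg hn]
  have hS : (∑' n : ℕ, if (lnorm j : ℝ) ≤ (n : ℝ) then
        (C₁ * t ^ 2 * Real.sqrt Mv *
          Real.sqrt (Real.log (Real.exp 1 + (n:ℝ))) / (n:ℝ) ^ 2) ^ n
      else 0) ≤ s₂^(t * Real.log t ^ α) * (1-s₂)⁻¹ := by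
    calc (∑' n : ℕ, if (lnorm j : ℝ) ≤ (n : ℝ) then
          (C₁ * t ^ 2 * Real.sqrt Mv *
            Real.sqrt (Real.log (Real.exp 1 + (n:ℝ))) / (n:ℝ) ^ 2) ^ n
        else 0)
        ≤ ∑' n : ℕ, s₂^(t * Real.log t ^ α) * s₂^n :=
          Summable.tsum_le_tsum hterm (hgsum.of_nonneg_of_le hfnonneg hterm) hgsum
      _ = s₂^(t * Real.log t ^ α) * ∑' n : ℕ, s₂^n := tsum_mul_left
      _ = s₂^(t * Real.log t ^ α) * (1-s₂)⁻¹ := by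
          rw [tsum_geometric_of_lt_one hs₂0.le hs₂1]
  -- apply the Jacobian hypothesis
  have hΔb := hΔ j t ht0 Mv hMv0 (hM t htn₀ ht1)
  -- final estimates
  have hinv4 : (1 - s₂)⁻¹ ≤ 4 := by
    have h34 : s₂ ≤ 3/4 := by
      rw [hs₂def, inv_le_comm₀ (by positivity) (by norm_num)]
      rw [show (3/4:ℝ)⁻¹ = 4/3 by norm_num]
      rw [show (4/3:ℝ) = Real.sqrt ((4/3)^2) by rw [Real.sqrt_sq (by norm_num)]]
      exact Real.sqrt_le_sqrt (by norm_num)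
    calc (1-s₂)⁻¹ ≤ (1/4:ℝ)⁻¹ := by
          apply inv_anti₀ (by norm_num) (by linarith)
      _ = 4 := by norm_num
  have hs₂T : s₂^(t * Real.log t ^ α) = Real.exp (-(c₂ * (t * Real.log t ^ α))) := by
    rw [Real.rpow_def_of_pos hs₂0, hs₂def, Real.log_inv,
      Real.log_sqrt (by norm_num : (0:ℝ) ≤ 2), hc₂def]
    ring_nf
  have hcT : (b+2) * t ≤ c₂ * (t * Real.log t ^ α) := by
    have h1 : b + 2 ≤ Real.log t ^ α * c₂ := by
      rw [div_le_iff₀ hc₂0] at hbα; linarith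
    calc (b+2)*t ≤ (Real.log t ^ α * c₂) * t := mul_le_mul_of_nonneg_right h1 ht0.le
      _ = c₂ * (t * Real.log t ^ α) := by ring
  have hexp2 : t * (1+t) ≤ Real.exp (2*t) := by
    have h1 : 1 + t ≤ Real.exp t := by linarith [Real.add_one_le_exp t]
    have h2 := mul_le_mul h1 h1 (by linarith) (Real.exp_nonneg t)
    rw [← Real.exp_add] at h2
    have h3 : t * (1+t) ≤ (1+t) * (1+t) :=
      mul_le_mul_of_nonneg_right (by linarith : t ≤ 1 + t) (by linarith : (0:ℝ) ≤ 1 + t)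
    rw [show 2*t = t + t by ring]
    linarith only [h2, h3]
  have h4t : 4/t < ε := by
    rw [div_lt_iff₀ ht0]
    have h1 : 4/ε < t := by linarith
    have h2 : 4 < t * ε := by rw [div_lt_iff₀ hε] at h1; linarith
    linarith
  calc Real.exp (b*t) * matNorm (Δ j t)
      ≤ Real.exp (b*t) * ((1 + t) * ∑' n : ℕ, if (lnorm j : ℝ) ≤ (n : ℝ) then
          (C₁ * t ^ 2 * Real.sqrt Mv *
            Real.sqrt (Real.log (Real.exp 1 + (n:ℝ))) / (n:ℝ) ^ 2) ^ n
        else 0) := mul_le_mul_of_nonneg_left hΔb (Real.exp_nonneg _)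
    _ ≤ Real.exp (b*t) * ((1 + t) * (s₂^(t * Real.log t ^ α) * 4)) := by
        apply mul_le_mul_of_nonneg_left _ (Real.exp_nonneg _)
        apply mul_le_mul_of_nonneg_left _ (by linarith : (0:ℝ) ≤ 1 + t)
        calc (∑' n : ℕ, if (lnorm j : ℝ) ≤ (n : ℝ) then
              (C₁ * t ^ 2 * Real.sqrt Mv *
                Real.sqrt (Real.log (Real.exp 1 + (n:ℝ))) / (n:ℝ) ^ 2) ^ n
            else 0)
            ≤ s₂^(t * Real.log t ^ α) * (1-s₂)⁻¹ := hS
          _ ≤ s₂^(t * Real.log t ^ α) * 4 :=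
              mul_le_mul_of_nonneg_left hinv4 (Real.rpow_nonneg hs₂0.le _)
    _ = 4*(1+t) * (Real.exp (b*t) * Real.exp (-(c₂ * (t * Real.log t ^ α)))) := by
        rw [hs₂T]; ring
    _ = 4*(1+t) * Real.exp (b*t - c₂ * (t * Real.log t ^ α)) := by
        rw [← Real.exp_add, show b*t + -(c₂ * (t * Real.log t ^ α)) =
          b*t - c₂ * (t * Real.log t ^ α) by ring]
    _ ≤ 4*(1+t) * Real.exp (-(2*t)) := by
        apply mul_le_mul_of_nonneg_left (Real.exp_le_exp.mpr (by linarith)) (by linarith)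
    _ ≤ 4/t := by
        rw [Real.exp_neg, ← div_eq_mul_inv, div_le_div_iff₀ (Real.exp_pos _) ht0]
        linarith only [hexp2]
    _ < ε := h4t
end
end

section
/- Uniform-in-time bound on Q along good trajectories: assume Φ_t : X₀ → X₀ is a one-parameter group with Q(Φ_{t+s}(x)) = Q(Φ_t(Φ_s(x))) and Q(Φ_t(x)) ≤ C₀{Q(x) log(e+Q(x)) + t⁴} for all x ∈ X₀ and t ≥ 0. Let δ > 1 and let x ∈ X₀ be such that there exists n₀ ∈ ℕ with Q(Φ_k(x)) ≤ (log k)^δ for every integer k ≥ n₀. Then there exist constants C > 0 and t₀ > 0 (depending on x, n₀, C₀, δ) such that sup_{0≤s≤t} Q(Φ_s(x)) ≤ C (log t)^δ log log t for all t ≥ t₀. -/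
open MeasureTheory Real Filter
open scoped ENNReal

noncomputable section

/-! Write `s = k + r` with `k = ⌊s⌋` and `r ∈ [0, 1)`. At the integer time `k ≥ n₀` the
hypothesis gives `Q ≤ (log k)^δ ≤ (log t)^δ`, and flowing for the remaining time `r ≤ 1`
costs one application of `Q ↦ C₀ (Q log(e + Q) + r⁴)`, which turns `(log t)^δ` into
`(log t)^δ log((log t)^δ) ≈ δ (log t)^δ log log t`. The bounded range `s ≤ n₀ + 1` is
covered by the a priori bound flowing from `x` itself. -/

lemma one_le_rpow_mul_log {ℓ δ : ℝ} (hℓ : exp 1 ≤ ℓ) (hδ : 0 ≤ δ) :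
    1 ≤ ℓ ^ δ * log ℓ := by
  have hℓ1 : 1 ≤ ℓ := (one_le_exp zero_le_one).trans hℓ
  have hlog : 1 ≤ log ℓ := (le_log_iff_exp_le (by linarith)).2 hℓ
  nlinarith [one_le_rpow hℓ1 hδ]

lemma mul_log_exp_one_add_le {a ℓ δ : ℝ} (ha : 0 ≤ a) (haℓ : a ≤ ℓ ^ δ)
    (hℓ : exp 1 ≤ ℓ) (hδ : 1 ≤ δ) :
    a * log (exp 1 + a) ≤ (1 + δ) * (ℓ ^ δ * log ℓ) := by
  have he1 : 1 ≤ exp 1 := one_le_exp zero_le_one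
  have hℓ1 : 1 ≤ ℓ := he1.trans hℓ
  have hℓ0 : 0 < ℓ := by linarith
  have hlogℓ : 1 ≤ log ℓ := (le_log_iff_exp_le hℓ0).2 hℓ
  have hℓδ : exp 1 ≤ ℓ ^ δ := hℓ.trans (self_le_rpow_of_one_le (by linarith) hδ)
  have hlog2 : log 2 ≤ 1 := by
    rw [← log_exp 1]
    exact log_le_log two_pos (by linarith [add_one_le_exp (1 : ℝ)])
  -- `e + a ≤ 2 ℓ^δ` and `log 2 ≤ 1 ≤ log ℓ`
  have hlog_le : log (exp 1 + a) ≤ (1 + δ) * log ℓ :=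
    calc log (exp 1 + a) ≤ log (2 * ℓ ^ δ) := log_le_log (by positivity) (by linarith)
      _ = log 2 + δ * log ℓ := by
        rw [log_mul two_ne_zero (rpow_pos_of_pos hℓ0 δ).ne', log_rpow hℓ0]
      _ ≤ (1 + δ) * log ℓ := by linarith
  calc a * log (exp 1 + a) ≤ ℓ ^ δ * ((1 + δ) * log ℓ) :=
        mul_le_mul haℓ hlog_le (log_nonneg (by linarith)) (by linarith)
    _ = (1 + δ) * (ℓ ^ δ * log ℓ) := by ring

section FlowBound

variable {α : Type*} {Q : α → ℝ≥0∞} {S : Set α} {Φ : ℝ → α → α} {C₀ : ℝ}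

lemma toReal_flow_le (hC₀ : 0 ≤ C₀)
    (hQbound : ∀ y ∈ S, ∀ t : ℝ, 0 ≤ t →
      Q (Φ t y) ≤ ENNReal.ofReal (C₀ * ((Q y).toReal * log (exp 1 + (Q y).toReal) + t ^ 4)))
    {y : α} (hy : y ∈ S) {t : ℝ} (ht : 0 ≤ t) :
    (Q (Φ t y)).toReal ≤ C₀ * ((Q y).toReal * log (exp 1 + (Q y).toReal) + t ^ 4) := by
  have hlog : 0 ≤ log (exp 1 + (Q y).toReal) :=
    log_nonneg (by linarith [one_le_exp (zero_le_one (α := ℝ)), (Q y).toReal_nonneg])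
  exact ENNReal.toReal_le_of_le_ofReal
    (mul_nonneg hC₀ (add_nonneg (mul_nonneg ENNReal.toReal_nonneg hlog) (by positivity)))
    (hQbound y hy t ht)

lemma toReal_flow_le_rpow_mul_log (hC₀ : 0 ≤ C₀)
    (hmap : ∀ t : ℝ, ∀ y ∈ S, Φ t y ∈ S)
    (hgroup : ∀ s t : ℝ, ∀ y ∈ S, Φ (t + s) y = Φ t (Φ s y))
    (hQbound : ∀ y ∈ S, ∀ t : ℝ, 0 ≤ t →
      Q (Φ t y) ≤ ENNReal.ofReal (C₀ * ((Q y).toReal * log (exp 1 + (Q y).toReal) + t ^ 4)))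
    {δ : ℝ} (hδ : 1 ≤ δ) {x : α} (hx : x ∈ S) {n₀ : ℕ}
    (hgood : ∀ k : ℕ, n₀ ≤ k → Q (Φ k x) ≤ ENNReal.ofReal (log k ^ δ))
    {s ℓ : ℝ} (hs : n₀ + 1 ≤ s) (hℓ : exp 1 ≤ ℓ) (hsℓ : log s ≤ ℓ) :
    (Q (Φ s x)).toReal ≤ C₀ * (δ + 2) * (ℓ ^ δ * log ℓ) := by
  set k := ⌊s⌋₊
  have hk : n₀ + 1 ≤ k := Nat.le_floor (by exact_mod_cast hs)
  have hk1 : (1 : ℝ) ≤ k := by exact_mod_cast (by omega : 1 ≤ k)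
  have hks : (k : ℝ) ≤ s := Nat.floor_le (by linarith)
  have hsk : s - k ≤ 1 := by linarith [Nat.lt_floor_add_one s]
  have hsplit : Φ s x = Φ (s - k) (Φ k x) := by
    rw [← hgroup _ _ x hx, sub_add_cancel]
  have hlogk : 0 ≤ log k := log_nonneg hk1
  have hL : (Q (Φ k x)).toReal ≤ ℓ ^ δ :=
    (ENNReal.toReal_le_of_le_ofReal (rpow_nonneg hlogk δ) (hgood k (by omega))).trans
      (rpow_le_rpow hlogk ((log_le_log (by linarith) hks).trans hsℓ) (by linarith))
  have hF := one_le_rpow_mul_log hℓ (by linarith : 0 ≤ δ)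
  have hr4 : (s - k) ^ 4 ≤ ℓ ^ δ * log ℓ :=
    (pow_le_one₀ (by linarith) hsk).trans hF
  calc (Q (Φ s x)).toReal
      ≤ C₀ * ((Q (Φ k x)).toReal * log (exp 1 + (Q (Φ k x)).toReal) + (s - k) ^ 4) := by
        rw [hsplit]; exact toReal_flow_le hC₀ hQbound (hmap _ x hx) (by linarith)
    _ ≤ C₀ * ((1 + δ) * (ℓ ^ δ * log ℓ) + ℓ ^ δ * log ℓ) := by
        gcongr C₀ * (?_ + ?_)
        exact mul_log_exp_one_add_le ENNReal.toReal_nonneg hL hℓ hδ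
    _ = C₀ * (δ + 2) * (ℓ ^ δ * log ℓ) := by ring

end FlowBound

theorem statement18_general {d : ℕ} (U : Polynomial ℝ)
    (K : ℝ)
    (Φ : ℝ → Conf d → Conf d)
    (hmap : ∀ t : ℝ, ∀ y ∈ X0 d U K, Φ t y ∈ X0 d U K)
    (hgroup : ∀ s t : ℝ, ∀ y ∈ X0 d U K, Φ (t + s) y = Φ t (Φ s y))
    (C₀ : ℝ) (hC₀ : 0 < C₀)
    (hQbound : ∀ y ∈ X0 d U K, ∀ t : ℝ, 0 ≤ t →
      Qen U K (Φ t y) ≤ ENNReal.ofReal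
        (C₀ * ((Qen U K y).toReal *
          Real.log (Real.exp 1 + (Qen U K y).toReal) + t ^ 4)))
    (δ : ℝ) (hδ : 1 < δ)
    (x : Conf d) (hx : x ∈ X0 d U K) (n₀ : ℕ)
    (hgood : ∀ k : ℕ, n₀ ≤ k → Qen U K (Φ k x) ≤ ENNReal.ofReal (Real.log k ^ δ)) :
    ∃ C > (0:ℝ), ∃ t₀ > (0:ℝ), ∀ t : ℝ, t₀ ≤ t → ∀ s ∈ Set.Icc (0:ℝ) t,
      (Qen U K (Φ s x)).toReal ≤ C * Real.log t ^ δ * Real.log (Real.log t) := by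
  set Q₀ := (Qen U K x).toReal
  set A := C₀ * (Q₀ * log (exp 1 + Q₀) + ((n₀ : ℝ) + 1) ^ 4)
  have hA : 0 ≤ A :=
    ENNReal.toReal_nonneg.trans (toReal_flow_le hC₀.le hQbound hx (by positivity))
  refine ⟨A + C₀ * (δ + 2), by positivity, exp (exp 1), exp_pos _, ?_⟩
  rintro t ht s ⟨hs0, hst⟩
  have hℓ : exp 1 ≤ log t := (le_log_iff_exp_le ((exp_pos _).trans_le ht)).2 ht
  have hF : 1 ≤ log t ^ δ * log (log t) := one_le_rpow_mul_log hℓ (by linarith)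
  rw [mul_assoc]
  rcases le_total s (n₀ + 1) with hs | hs
  · calc (Qen U K (Φ s x)).toReal ≤ A :=
          (toReal_flow_le hC₀.le hQbound hx hs0).trans (by dsimp only [A]; gcongr)
      _ ≤ A * (log t ^ δ * log (log t)) := le_mul_of_one_le_right hA hF
      _ ≤ (A + C₀ * (δ + 2)) * (log t ^ δ * log (log t)) := by
          gcongr; linarith [mul_pos hC₀ (by linarith : 0 < δ + 2)]
  · calc (Qen U K (Φ s x)).toReal ≤ C₀ * (δ + 2) * (log t ^ δ * log (log t)) :=
          toReal_flow_le_rpow_mul_log hC₀.le hmap hgroup hQbound hδ.le hx hgood hs hℓ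
            (log_le_log (by linarith) hst)
      _ ≤ (A + C₀ * (δ + 2)) * (log t ^ δ * log (log t)) := by
          gcongr; linarith

/-- Uniform-in-time bound on `Q` along good trajectories: if `Φ` is a one-parameter
group with `Q(Φ_t(x)) ≤ C₀{Q(x) log(e+Q(x)) + t⁴}` for `t ≥ 0`, and
`Q(Φ_k(x)) ≤ (log k)^δ` for all integers `k ≥ n₀`, then
`sup_{0≤s≤t} Q(Φ_s(x)) ≤ C (log t)^δ log log t` for all `t ≥ t₀`. -/
theorem statement18 {d : ℕ} (hd : 0 < d) (U : Polynomial ℝ) (hUdeg : U.degree = 4)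
    (hUpos : ∀ y : ℝ, 0 ≤ U.eval y) (hUlead : 0 < U.leadingCoeff)
    (K : ℝ) (hK : 0 < K)
    (Φ : ℝ → Conf d → Conf d)
    (hmap : ∀ t : ℝ, ∀ y ∈ X0 d U K, Φ t y ∈ X0 d U K)
    (hgroup : ∀ s t : ℝ, ∀ y ∈ X0 d U K, Φ (t + s) y = Φ t (Φ s y))
    (C₀ : ℝ) (hC₀ : 0 < C₀)
    (hQbound : ∀ y ∈ X0 d U K, ∀ t : ℝ, 0 ≤ t →
      Qen U K (Φ t y) ≤ ENNReal.ofReal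
        (C₀ * ((Qen U K y).toReal *
          Real.log (Real.exp 1 + (Qen U K y).toReal) + t ^ 4)))
    (δ : ℝ) (hδ : 1 < δ)
    (x : Conf d) (hx : x ∈ X0 d U K) (n₀ : ℕ)
    (hgood : ∀ k : ℕ, n₀ ≤ k → Qen U K (Φ k x) ≤ ENNReal.ofReal (Real.log k ^ δ)) :
    ∃ C > (0:ℝ), ∃ t₀ > (0:ℝ), ∀ t : ℝ, t₀ ≤ t → ∀ s ∈ Set.Icc (0:ℝ) t,
      (Qen U K (Φ s x)).toReal ≤ C * Real.log t ^ δ * Real.log (Real.log t) :=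
  statement18_general U K Φ hmap hgroup C₀ hC₀ hQbound δ hδ x hx n₀ hgood
end
end
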